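/- arXiv:2001.11098 — 5 statements merged into one kernel-verified Lean document; each statement's English description precedes it below -/
import Mathlib

section
/- Let 0 < λ ≤ 1 and let p be analytic on 𝔻 with p(0) = 1, p not identically equal to 1, and p(z) ≠ 0 for all z ∈ 𝔻. If Re(z p'(z)/p(z)) < λ/2 for all z ∈ 𝔻, then there exists an integer n ≥ 1 such that p(z) ≺ (1 + z^n)^{λ/n} on 𝔻. -/
open Complex Metric

/-- `p ≺ q` on the unit disk: there is an analytic `ω : 𝔻 → 𝔻` with `ω 0 = 0`
and `p = q ∘ ω` on `𝔻`. -/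
def Subord (p q : ℂ → ℂ) : Prop :=
  ∃ ω : ℂ → ℂ, DifferentiableOn ℂ ω (ball 0 1) ∧
    Set.MapsTo ω (ball 0 1) (ball 0 1) ∧ ω 0 = 0 ∧
    ∀ z ∈ ball (0:ℂ) 1, p z = q (ω z)

/-!
Take `n = 1`. Let `L` be a holomorphic logarithm of `p` with `L 0 = 0` and put
`ω = exp (L / λ) - 1`, so that `1 + ω = p ^ (1 / λ)` and
`Re (z ω' / (1 + ω)) = λ⁻¹ Re (z p' / p) < 1 / 2`. If `‖ω‖` reached `1` in the disc, then at a
point `z₀` of least modulus where it does, Jack's lemma gives `z₀ ω'(z₀) = k ω(z₀)` with `k ≥ 1`,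
and since `Re (w / (1 + w)) = 1 / 2` on `‖w‖ = 1` this forces `Re (z₀ ω' / (1 + ω)) ≥ 1 / 2`.
Hence `ω` maps the disc into itself, `Re (1 + ω) > 0` keeps `Im (L / λ)` in `(-π/2, π/2)`, so
`log (1 + ω) = L / λ` and `p = exp (λ log (1 + ω))`.

Jack's lemma: by Schwarz's lemma `‖ω (t z₀)‖ ≤ t ‖ω z₀‖`, so the radial derivative of `‖ω‖²`
at `z₀` is at least `2 ‖ω z₀‖²`, while its tangential derivative vanishes at the maximum on the
circle `‖z‖ = ‖z₀‖`.
-/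

open ComplexConjugate

theorem sq_norm_le_re_mul_deriv_mul_conj {ω : ℂ → ℂ} {z₀ : ℂ}
    (hω : DifferentiableOn ℂ ω (ball 0 ‖z₀‖)) (hd : DifferentiableAt ℂ ω z₀) (hω₀ : ω 0 = 0)
    (hmax : ∀ z ∈ ball (0:ℂ) ‖z₀‖, ‖ω z‖ ≤ ‖ω z₀‖) :
    ‖ω z₀‖ ^ 2 ≤ (z₀ * deriv ω z₀ * conj (ω z₀)).re := by
  rcases eq_or_ne z₀ 0 with rfl | hz₀
  · simp [hω₀]
  have hr : 0 < ‖z₀‖ := norm_pos_iff.mpr hz₀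
  -- Schwarz's lemma on the disc of radius `‖z₀‖`
  have hschwarz : ∀ t ∈ Set.Icc (0:ℝ) 1, ‖ω (t * z₀)‖ ≤ ‖ω z₀‖ * t := by
    rintro t ⟨ht0, ht1⟩
    rcases ht1.lt_or_eq with ht1 | rfl
    · have hmem : (t:ℂ) * z₀ ∈ ball (0:ℂ) ‖z₀‖ := by
        simpa [abs_of_nonneg ht0] using mul_lt_of_lt_one_left hr ht1
      have := Complex.dist_le_div_mul_dist_of_mapsTo_ball hω
        (fun z hz => by simpa [hω₀] using hmax z hz) hmem
      simpa [hω₀, abs_of_nonneg ht0, hr.ne', field] using this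
    · simp
  set g : ℝ → ℝ := fun t => ‖ω (t * z₀)‖ ^ 2 - (‖ω z₀‖ * t) ^ 2
  have hmaxOn : IsMaxOn g (Set.Icc 0 1) 1 := fun t ht => by
    simpa [g] using pow_le_pow_left₀ (norm_nonneg _) (hschwarz t ht) 2
  have hg : HasDerivAt g
      (2 * (z₀ * deriv ω z₀ * conj (ω z₀)).re - 2 * ‖ω z₀‖ ^ 2) 1 := by
    have hray : HasDerivAt (fun t : ℝ => (t:ℂ) * z₀) z₀ 1 := by
      simpa using ((hasDerivAt_id (1:ℂ)).mul_const z₀).comp_ofReal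
    refine (((hd.hasDerivAt.comp_of_eq 1 hray (by simp)).norm_sq).sub
      (((hasDerivAt_id (1:ℝ)).const_mul ‖ω z₀‖).pow 2)).congr_deriv ?_
    simp only [id, Function.comp_apply, ofReal_one, one_mul, Complex.inner, mul_comm (deriv ω z₀)]
    ring
  -- a maximum at the right end of `[0, 1]` forces `g' 1 ≥ 0`
  have := hmaxOn.localize.hasFDerivWithinAt_nonpos hg.hasFDerivAt.hasFDerivWithinAt
    (y := -1) (mem_posTangentConeAt_of_segment_subset ?_)
  · simp only [ContinuousLinearMap.toSpanSingleton_apply, smul_eq_mul] at this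
    linarith
  · simpa using (convex_Icc (0:ℝ) 1).segment_subset (by simp) (by simp)

theorem im_mul_deriv_mul_conj_eq_zero {ω : ℂ → ℂ} {z₀ : ℂ} (hd : DifferentiableAt ℂ ω z₀)
    (hmax : ∀ z, ‖z‖ = ‖z₀‖ → ‖ω z‖ ≤ ‖ω z₀‖) :
    (z₀ * deriv ω z₀ * conj (ω z₀)).im = 0 := by
  have hcurve : HasDerivAt (fun θ : ℝ => exp (θ * I) * z₀) (I * z₀) 0 := by
    simpa using ((hasDerivAt_id (0:ℂ)).mul_const I).cexp.mul_const z₀ |>.comp_ofReal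
  have hnorm : HasDerivAt (fun θ : ℝ => ‖ω (exp (θ * I) * z₀)‖ ^ 2)
      (2 * (I * (z₀ * deriv ω z₀ * conj (ω z₀))).re) 0 := by
    refine (hd.hasDerivAt.comp_of_eq 0 hcurve (by simp)).norm_sq.congr_deriv ?_
    simp only [Function.comp_apply, ofReal_zero, zero_mul, exp_zero, one_mul, Complex.inner]
    ring_nf
  have hlocalMax : IsLocalMax (fun θ : ℝ => ‖ω (exp (θ * I) * z₀)‖ ^ 2) 0 :=
    Filter.Eventually.of_forall fun θ => by
      simpa using pow_le_pow_left₀ (norm_nonneg _) (hmax _ (by simp)) 2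
  have := hlocalMax.hasDerivAt_eq_zero hnorm
  rw [I_mul_re] at this
  linarith

theorem exists_one_le_mul_deriv_eq_of_isMaxOn {ω : ℂ → ℂ} {R : ℝ} {z₀ : ℂ}
    (hω : DifferentiableOn ℂ ω (ball 0 R)) (hω₀ : ω 0 = 0) (hz₀ : z₀ ∈ ball (0:ℂ) R)
    (hmax : IsMaxOn (‖ω ·‖) (closedBall 0 ‖z₀‖) z₀) (hne : ω z₀ ≠ 0) :
    ∃ k : ℝ, 1 ≤ k ∧ z₀ * deriv ω z₀ = k * ω z₀ := by
  have hsub : ball (0:ℂ) ‖z₀‖ ⊆ ball 0 R := ball_subset_ball (mem_ball_zero_iff.mp hz₀).le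
  have hd : DifferentiableAt ℂ ω z₀ := hω.differentiableAt (isOpen_ball.mem_nhds hz₀)
  set c := z₀ * deriv ω z₀ * conj (ω z₀)
  have hre := sq_norm_le_re_mul_deriv_mul_conj (hω.mono hsub) hd hω₀
    fun z hz => hmax (ball_subset_closedBall hz)
  have him := im_mul_deriv_mul_conj_eq_zero hd
    fun z hz => hmax (mem_closedBall_zero_iff.mpr hz.le)
  have hpos : 0 < ‖ω z₀‖ ^ 2 := by positivity
  refine ⟨c.re / ‖ω z₀‖ ^ 2, (one_le_div hpos).mpr hre, ?_⟩
  -- `c` is real, so `z₀ ω'(z₀) = c ω z₀ / ‖ω z₀‖²`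
  have hc : (c.re : ℂ) = c := Complex.ext rfl ((ofReal_im _).trans him.symm)
  rw [Complex.ofReal_div, hc, Complex.ofReal_pow, ← Complex.mul_conj', div_mul_eq_mul_div,
    eq_div_iff (by simpa using hne)]
  ring

theorem exists_norm_eq_one_isMaxOn {ω : ℂ → ℂ} (hω : ContinuousOn ω (ball 0 1))
    (hω₀ : ‖ω 0‖ < 1) {z₁ : ℂ} (hz₁ : z₁ ∈ ball (0:ℂ) 1) (hge : 1 ≤ ‖ω z₁‖) :
    ∃ z₀ ∈ ball (0:ℂ) 1, ‖ω z₀‖ = 1 ∧ IsMaxOn (‖ω ·‖) (closedBall 0 ‖z₀‖) z₀ := by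
  have hsub : closedBall (0:ℂ) ‖z₁‖ ⊆ ball 0 1 :=
    closedBall_subset_ball (mem_ball_zero_iff.mp hz₁)
  -- `z₀` is a point of least modulus with `1 ≤ ‖ω z₀‖`
  have hA : IsCompact (closedBall (0:ℂ) ‖z₁‖ ∩ (‖ω ·‖) ⁻¹' Set.Ici 1) :=
    (isCompact_closedBall 0 _).of_isClosed_subset ((hω.mono hsub).norm.preimage_isClosed_of_isClosed
      isClosed_closedBall isClosed_Ici) Set.inter_subset_left
  obtain ⟨z₀, ⟨hz₀, hz₀ge⟩, hmin⟩ := hA.exists_isMinOn ⟨z₁, by simp [hge]⟩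
    continuous_norm.continuousOn
  have hz₀ne : z₀ ≠ 0 := by rintro rfl; exact hω₀.not_ge hz₀ge
  have hsub₀ : closedBall (0:ℂ) ‖z₀‖ ⊆ closedBall 0 ‖z₁‖ :=
    closedBall_subset_closedBall (mem_closedBall_zero_iff.mp hz₀)
  have hball : ball (0:ℂ) ‖z₀‖ ⊆ closedBall 0 ‖z₀‖ ∩ (‖ω ·‖) ⁻¹' Set.Iic 1 := fun z hz =>
    ⟨ball_subset_closedBall hz, show ‖ω z‖ ≤ 1 from le_of_not_gt fun h =>
      (mem_ball_zero_iff.mp hz).not_ge (hmin ⟨hsub₀ (ball_subset_closedBall hz), h.le⟩)⟩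
  have hle : ∀ z ∈ closedBall (0:ℂ) ‖z₀‖, ‖ω z‖ ≤ 1 := fun z hz =>
    (((hω.mono (hsub₀.trans hsub)).norm.preimage_isClosed_of_isClosed isClosed_closedBall
      isClosed_Iic).closure_subset_iff.mpr hball
      (by rwa [closure_ball 0 (norm_ne_zero_iff.mpr hz₀ne)])).2
  have h1 : ‖ω z₀‖ = 1 := le_antisymm (hle z₀ (by simp)) hz₀ge
  exact ⟨z₀, hsub hz₀, h1, fun z hz => by simpa [h1] using hle z hz⟩

theorem re_div_one_add_eq_half {w : ℂ} (hw : ‖w‖ = 1) (hw' : 1 + w ≠ 0) :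
    (w / (1 + w)).re = 1 / 2 := by
  have hsq : w.re * w.re + w.im * w.im = 1 := by
    rw [← normSq_apply, normSq_eq_norm_sq, hw, one_pow]
  have hden : normSq (1 + w) = 2 * (1 + w.re) := by
    rw [normSq_apply]
    simp only [add_re, one_re, add_im, one_im, zero_add]
    linear_combination hsq
  have hpos : 0 < 1 + w.re := by
    have := normSq_pos.mpr hw'
    rw [hden] at this
    linarith
  rw [div_re, hden]
  simp only [add_re, one_re, add_im, one_im, zero_add]
  field_simp
  linear_combination hsq

theorem norm_lt_one_of_re_mul_deriv_div_lt_half {ω : ℂ → ℂ}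
    (hω : DifferentiableOn ℂ ω (ball 0 1)) (hω₀ : ω 0 = 0)
    (hne : ∀ z ∈ ball (0:ℂ) 1, 1 + ω z ≠ 0)
    (hre : ∀ z ∈ ball (0:ℂ) 1, (z * deriv ω z / (1 + ω z)).re < 1 / 2) :
    ∀ z ∈ ball (0:ℂ) 1, ‖ω z‖ < 1 := by
  intro z₁ hz₁
  by_contra! hge
  obtain ⟨z₀, hz₀, h1, hmax⟩ :=
    exists_norm_eq_one_isMaxOn hω.continuousOn (by simp [hω₀]) hz₁ hge
  obtain ⟨k, hk, hjack⟩ := exists_one_le_mul_deriv_eq_of_isMaxOn hω hω₀ hz₀ hmax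
    (norm_ne_zero_iff.mp (by simp [h1]))
  have := hre z₀ hz₀
  rw [hjack, mul_div_assoc, re_ofReal_mul, re_div_one_add_eq_half h1 (hne z₀ hz₀)] at this
  linarith

theorem norm_exp_sub_one_lt_one {M M' : ℂ → ℂ}
    (hM : ∀ z ∈ ball (0:ℂ) 1, HasDerivAt M (M' z) z) (hM₀ : M 0 = 0)
    (hre : ∀ z ∈ ball (0:ℂ) 1, (z * M' z).re < 1 / 2) :
    ∀ z ∈ ball (0:ℂ) 1, ‖exp (M z) - 1‖ < 1 := by
  have hω : ∀ z ∈ ball (0:ℂ) 1, HasDerivAt (fun z => exp (M z) - 1) (exp (M z) * M' z) z :=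
    fun z hz => (hM z hz).cexp.sub_const 1
  refine norm_lt_one_of_re_mul_deriv_div_lt_half
    (fun z hz => (hω z hz).differentiableAt.differentiableWithinAt) (by simp [hM₀])
    (fun z _ => by simp [exp_ne_zero]) fun z hz => ?_
  rw [(hω z hz).deriv, add_sub_cancel, mul_left_comm, mul_div_cancel_left₀ _ (exp_ne_zero _)]
  exact hre z hz

theorem exists_hasDerivAt_log_deriv_of_ne_zero {p : ℂ → ℂ} {c : ℂ} {r : ℝ}
    (hp : DifferentiableOn ℂ p (ball c r)) (hne : ∀ z ∈ ball c r, p z ≠ 0) :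
    ∃ L : ℂ → ℂ, L c = log (p c) ∧
      ∀ z ∈ ball c r, HasDerivAt L (deriv p z / p z) z ∧ exp (L z) = p z := by
  have hdiv : DifferentiableOn ℂ (fun z => deriv p z / p z) (ball c r) :=
    (hp.deriv isOpen_ball).div hp hne
  obtain ⟨L, hLc, hL⟩ := hdiv.isExactOn_ball.with_val_at c (log (p c))
  refine ⟨L, hLc, fun z hz => ⟨hL z hz, ?_⟩⟩
  have hc : c ∈ ball c r := mem_ball_self (pos_of_mem_ball hz)
  -- `p * exp (-L)` has derivative `p' exp (-L) - p (p'/p) exp (-L) = 0`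
  have hderiv : ∀ x ∈ ball c r, HasDerivAt (fun z => p z * exp (-L z)) 0 x := by
    intro x hx
    refine ((hp.differentiableAt (isOpen_ball.mem_nhds hx)).hasDerivAt.mul
      (hL x hx).neg.cexp).congr_deriv ?_
    field_simp [hne x hx]
    ring
  have hconst := isOpen_ball.is_const_of_deriv_eq_zero (convex_ball c r).isPreconnected
    (fun x hx => (hderiv x hx).differentiableAt.differentiableWithinAt)
    (fun x hx => (hderiv x hx).deriv) hz hc
  simp only [hLc, exp_neg, exp_log (hne c hc), mul_inv_cancel₀ (hne c hc)] at hconst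
  rw [mul_inv_eq_one₀ (exp_ne_zero _)] at hconst
  exact hconst.symm

theorem log_exp_eq_of_re_exp_pos {X : Type*} [TopologicalSpace X] {S : Set X}
    (hS : IsPreconnected S) {M : X → ℂ} (hM : ContinuousOn M S) {x₀ : X} (hx₀ : x₀ ∈ S)
    (hM₀ : M x₀ = 0) (hpos : ∀ x ∈ S, 0 < (exp (M x)).re) :
    ∀ x ∈ S, log (exp (M x)) = M x := by
  have hcos : ∀ x ∈ S, 0 < Real.cos (M x).im := fun x hx => by
    have := hpos x hx
    rw [exp_re] at this
    exact pos_of_mul_pos_right this (Real.exp_pos _).le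
  have habs : ∀ x ∈ S, |(M x).im| < Real.pi / 2 := by
    intro x hx
    by_contra! hx'
    obtain ⟨y, hy, hy'⟩ := hS.intermediate_value hx₀ hx
      (continuous_abs.comp_continuousOn (continuous_im.comp_continuousOn hM))
      ⟨by simp [hM₀, Real.pi_div_two_pos.le], hx'⟩
    have := hcos y hy
    rw [← Real.cos_abs, show |(M y).im| = Real.pi / 2 from hy', Real.cos_pi_div_two] at this
    exact this.false
  intro x hx
  have := abs_lt.mp (habs x hx)
  exact log_exp (by linarith [Real.pi_pos]) (by linarith [Real.pi_pos])

theorem stmt1_general (lam : ℝ) (hlam0 : 0 < lam)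
    (p : ℂ → ℂ) (hp : DifferentiableOn ℂ p (ball 0 1))
    (hp0 : p 0 = 1)
    (hpne0 : ∀ z ∈ ball (0:ℂ) 1, p z ≠ 0)
    (hre : ∀ z ∈ ball (0:ℂ) 1, (z * deriv p z / p z).re < lam / 2) :
    ∃ n : ℕ, 1 ≤ n ∧
      Subord p (fun z => Complex.exp (((lam / n : ℝ) : ℂ) * Complex.log (1 + z ^ n))) := by
  obtain ⟨L, hL₀, hL⟩ := exists_hasDerivAt_log_deriv_of_ne_zero hp hpne0
  set M : ℂ → ℂ := fun z => ((lam⁻¹ : ℝ) : ℂ) * L z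
  have hM : ∀ z ∈ ball (0:ℂ) 1, HasDerivAt M (((lam⁻¹ : ℝ) : ℂ) * (deriv p z / p z)) z :=
    fun z hz => (hL z hz).1.const_mul _
  have hM₀ : M 0 = 0 := by simp [M, hL₀, hp0]
  have hlt := norm_exp_sub_one_lt_one hM hM₀ fun z hz => by
    rw [mul_left_comm, ← mul_div_assoc, re_ofReal_mul, inv_mul_lt_iff₀ hlam0]
    linarith [hre z hz]
  have hlog : ∀ z ∈ ball (0:ℂ) 1, log (exp (M z)) = M z :=
    log_exp_eq_of_re_exp_pos (convex_ball 0 1).isPreconnected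
      (fun z hz => (hM z hz).continuousAt.continuousWithinAt) (mem_ball_self one_pos) hM₀
      fun z hz => by
        have := (abs_re_le_norm _).trans_lt (hlt z hz)
        rw [sub_re, one_re] at this
        linarith [abs_lt.mp this]
  refine ⟨1, le_rfl, fun z => exp (M z) - 1,
    fun z hz => ((hM z hz).cexp.sub_const 1).differentiableAt.differentiableWithinAt,
    fun z hz => mem_ball_zero_iff.mpr (hlt z hz), by simp [hM₀], fun z hz => ?_⟩
  simp only [Nat.cast_one, div_one, pow_one, add_sub_cancel, hlog z hz, M]
  rw [← mul_assoc, ← ofReal_mul, mul_inv_cancel₀ hlam0.ne', ofReal_one, one_mul, (hL z hz).2]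

/-- If `p` is analytic on `𝔻` with `p 0 = 1`, `p` not identically `1`,
`p ≠ 0` on `𝔻`, and `Re (z p'(z)/p(z)) < λ/2` on `𝔻` (`0 < λ ≤ 1`), then there is an
integer `n ≥ 1` with `p ≺ (1 + z^n)^{λ/n}` on `𝔻`. -/
theorem stmt1 (lam : ℝ) (hlam0 : 0 < lam) (hlam1 : lam ≤ 1)
    (p : ℂ → ℂ) (hp : DifferentiableOn ℂ p (ball 0 1))
    (hp0 : p 0 = 1)
    (hpne1 : ¬ (∀ z ∈ ball (0:ℂ) 1, p z = 1))
    (hpne0 : ∀ z ∈ ball (0:ℂ) 1, p z ≠ 0)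
    (hre : ∀ z ∈ ball (0:ℂ) 1, (z * deriv p z / p z).re < lam / 2) :
    ∃ n : ℕ, 1 ≤ n ∧
      Subord p (fun z => Complex.exp (((lam / n : ℝ) : ℂ) * Complex.log (1 + z ^ n))) :=
  stmt1_general lam hlam0 p hp hp0 hpne0 hre
end

section
/- Let 0 < λ ≤ 1 and let f ∈ 𝒜 with f'(z) ≠ 0 on 𝔻 and f(z) ≠ 0 for z ∈ 𝔻 \ {0}, and suppose z f'(z)/f(z) is not identically 1. If Re(1 + z f''(z)/f'(z) − z f'(z)/f(z)) < λ/2 for all z ∈ 𝔻, then there exists an integer n ≥ 1 such that z f'(z)/f(z) ≺ (1 + z^n)^{λ/n} on 𝔻. -/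
/-!
Write `z f'/f = p = e^g` and `q = e^(g/λ)`. Then `q^λ = p` and
`Re (z q'/q) = Re (z p'/p) / λ < 1/2`, because `z p'/p = 1 + z f''/f' - z f'/f`.
The function `ω = q - 1` maps `𝔻` into `𝔻` by Jack's lemma: otherwise, at a point `z₀` of least
modulus with `|ω z₀| = 1` one has `z₀ ω'(z₀) = k ω(z₀)` with `k ≥ 1`, whence
`Re (z₀ q'/q) = k Re (ω/(1+ω)) = k/2 ≥ 1/2`. Hence `p = (1 + ω)^λ`, the claim with `n = 1`.

In Jack's lemma, `|ω|` restricted to the circle `|z| = |z₀|` is maximal at `z₀`, so `z₀ ω'/ω` is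
real; Schwarz's lemma on the disc of radius `|z₀|` gives `|ω(t z₀)| ≤ t` for `t < 1`, so the radial
derivative `Re (z₀ ω'/ω)` is at least `1`.
-/

open Complex Metric

open ComplexConjugate Set Filter Topology

section

variable {w : ℂ → ℂ}

theorem exists_norm_eq_one_of_one_le_norm (hw : ContinuousOn w (ball 0 1)) (hw0 : ‖w 0‖ < 1)
    {z₁ : ℂ} (hz₁ : z₁ ∈ ball (0:ℂ) 1) (h1 : 1 ≤ ‖w z₁‖) :
    ∃ z₀ ∈ ball (0:ℂ) 1, ‖w z₀‖ = 1 ∧ ∀ z, ‖z‖ ≤ ‖z₀‖ → ‖w z‖ ≤ 1 := by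
  have hK : closedBall (0:ℂ) ‖z₁‖ ⊆ ball 0 1 :=
    closedBall_subset_ball (mem_ball_zero_iff.1 hz₁)
  have hwK := (hw.mono hK).norm
  have hS : IsCompact (closedBall (0:ℂ) ‖z₁‖ ∩ (‖w ·‖) ⁻¹' Ici 1) :=
    (isCompact_closedBall 0 _).of_isClosed_subset
      (hwK.preimage_isClosed_of_isClosed isClosed_closedBall isClosed_Ici) inter_subset_left
  obtain ⟨z₀, ⟨hz₀K, hz₀1⟩, hmin⟩ :=
    hS.exists_isMinOn ⟨z₁, by simp, h1⟩ continuous_norm.continuousOn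
  have hz₀ : ‖z₀‖ ≠ 0 := by
    rintro h
    rw [norm_eq_zero.1 h] at hz₀1
    exact (hw0.trans_le hz₀1).false
  have hball : ball (0:ℂ) ‖z₀‖ ⊆ closedBall 0 ‖z₁‖ ∩ (‖w ·‖) ⁻¹' Iic 1 := by
    intro z hz
    rw [mem_ball_zero_iff] at hz
    have hzK : z ∈ closedBall (0:ℂ) ‖z₁‖ :=
      mem_closedBall_zero_iff.2 (hz.le.trans (mem_closedBall_zero_iff.1 hz₀K))
    refine ⟨hzK, show ‖w z‖ ≤ 1 from le_of_not_ge fun h => ?_⟩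
    exact (hz.trans_le (hmin ⟨hzK, h⟩)).false
  have hclosed := (closure_minimal hball
    (hwK.preimage_isClosed_of_isClosed isClosed_closedBall isClosed_Iic))
  rw [closure_ball 0 hz₀] at hclosed
  refine ⟨z₀, hK hz₀K, le_antisymm ?_ hz₀1, fun z hz => (hclosed (by simpa using hz)).2⟩
  exact (hclosed (by simp)).2

theorem hasDerivAt_norm_sq_comp {γ : ℝ → ℂ} {γ' : ℂ} {t : ℝ} (hw : DifferentiableAt ℂ w (γ t))
    (hγ : HasDerivAt γ γ' t) :
    HasDerivAt (fun s => ‖w (γ s)‖ ^ 2) (2 * (conj (w (γ t)) * (γ' * deriv w (γ t))).re) t := by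
  convert (hw.hasDerivAt.comp t hγ).norm_sq using 2
  · rfl
  · rw [Complex.inner, Function.comp_apply]
    ring_nf

theorem im_conj_mul_mul_deriv_eq_zero_of_isMaxOn {z₀ : ℂ} (hw : DifferentiableAt ℂ w z₀)
    (hmax : IsMaxOn (‖w ·‖) (sphere 0 ‖z₀‖) z₀) :
    (conj (w z₀) * (z₀ * deriv w z₀)).im = 0 := by
  have hγ : HasDerivAt (fun θ : ℝ => exp (θ * I) * z₀) (I * z₀) 0 := by
    convert (((hasDerivAt_id (0:ℂ)).mul_const I).cexp.mul_const z₀).comp_ofReal using 1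
      <;> simp
  have hloc : IsLocalMax (fun θ : ℝ => ‖w (exp (θ * I) * z₀)‖ ^ 2) 0 :=
    Eventually.of_forall fun θ => by
      have := hmax (show exp (θ * I) * z₀ ∈ sphere 0 ‖z₀‖ by simp [norm_exp_ofReal_mul_I])
      simpa using pow_le_pow_left₀ (norm_nonneg _) this 2
  have := hloc.hasDerivAt_eq_zero (hasDerivAt_norm_sq_comp (by simpa using hw) hγ)
  simp only [ofReal_zero, zero_mul, exp_zero, one_mul] at this
  have h : conj (w z₀) * (I * z₀ * deriv w z₀) = I * (conj (w z₀) * (z₀ * deriv w z₀)) := by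
    ring
  rw [h, mul_re, I_re, I_im] at this
  linarith

theorem one_le_re_conj_mul_mul_deriv_of_mapsTo_ball {r : ℝ} (hd : DifferentiableOn ℂ w (ball 0 r))
    (hmaps : MapsTo w (ball 0 r) (closedBall 0 1)) (hw0 : w 0 = 0) {z₀ : ℂ} (hz₀ : ‖z₀‖ = r)
    (hdz₀ : DifferentiableAt ℂ w z₀) (hwz₀ : ‖w z₀‖ = 1) :
    1 ≤ (conj (w z₀) * (z₀ * deriv w z₀)).re := by
  have hr : 0 < r := by
    rw [← hz₀, norm_pos_iff]
    rintro rfl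
    simp [hw0] at hwz₀
  have hγ : HasDerivAt (fun t : ℝ => (t : ℂ) * z₀) z₀ 1 := by
    simpa using (hasDerivAt_id ((1:ℝ):ℂ)).comp_ofReal.mul_const z₀
  have hφ := (hasDerivAt_norm_sq_comp (by simpa using hdz₀) hγ).sub (hasDerivAt_pow 2 (1:ℝ))
  have hmax : IsMaxOn (fun t : ℝ => ‖w (t * z₀)‖ ^ 2 - t ^ 2) (Icc 0 1) 1 := by
    refine isMaxOn_iff.2 fun t ⟨ht0, ht1⟩ => ?_
    rcases ht1.lt_or_eq with ht1 | rfl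
    · have hnorm : ‖(t : ℂ) * z₀‖ = t * r := by simp [hz₀, abs_of_nonneg ht0]
      have hschwarz := Complex.dist_le_div_mul_dist_of_mapsTo_ball hd (by rwa [hw0])
        (mem_ball_zero_iff.2 (show ‖(t : ℂ) * z₀‖ < r by rw [hnorm]; nlinarith))
      rw [hw0, dist_zero_right, dist_zero_right, hnorm] at hschwarz
      have : ‖w (t * z₀)‖ ≤ t := by
        calc ‖w (t * z₀)‖ ≤ 1 / r * (t * r) := hschwarz
        _ = t := by field_simp
      simp only [one_pow, sub_self, hwz₀, ofReal_one, one_mul]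
      nlinarith [norm_nonneg (w (t * z₀))]
    · simp
  have := hmax.localize.hasFDerivWithinAt_nonpos hφ.hasFDerivAt.hasFDerivWithinAt
    (y := -1) (mem_posTangentConeAt_of_segment_subset (by
      rw [add_neg_cancel, segment_symm, segment_eq_Icc zero_le_one]))
  simp only [ofReal_one, one_mul, ContinuousLinearMap.toSpanSingleton_apply, smul_eq_mul] at this
  norm_num only at this
  linarith

/-- Jack's lemma. -/
theorem exists_mul_deriv_eq_real_mul_of_one_le_norm (hw : DifferentiableOn ℂ w (ball 0 1))
    (hw0 : w 0 = 0) {z₁ : ℂ} (hz₁ : z₁ ∈ ball (0:ℂ) 1) (h1 : 1 ≤ ‖w z₁‖) :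
    ∃ z₀ ∈ ball (0:ℂ) 1, ‖w z₀‖ = 1 ∧ ∃ k : ℝ, 1 ≤ k ∧ z₀ * deriv w z₀ = k * w z₀ := by
  obtain ⟨z₀, hz₀, hwz₀, hle⟩ :=
    exists_norm_eq_one_of_one_le_norm hw.continuousOn (by simp [hw0]) hz₁ h1
  have hdz₀ : DifferentiableAt ℂ w z₀ := hw.differentiableAt (isOpen_ball.mem_nhds hz₀)
  set κ := conj (w z₀) * (z₀ * deriv w z₀)
  have hre : 1 ≤ κ.re := one_le_re_conj_mul_mul_deriv_of_mapsTo_ball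
    (hw.mono (ball_subset_ball (mem_ball_zero_iff.1 hz₀).le))
    (fun z hz => mem_closedBall_zero_iff.2 (hle z (mem_ball_zero_iff.1 hz).le)) hw0 rfl hdz₀ hwz₀
  have him : κ.im = 0 := im_conj_mul_mul_deriv_eq_zero_of_isMaxOn hdz₀
    (fun z hz => by simpa [hwz₀] using hle z (mem_sphere_zero_iff_norm.1 hz).le)
  refine ⟨z₀, hz₀, hwz₀, κ.re, hre, ?_⟩
  rw [show (κ.re : ℂ) = κ from Complex.ext (by simp) (by simp [him]),
    show κ * w z₀ = w z₀ * conj (w z₀) * (z₀ * deriv w z₀) by ring,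
    mul_conj, normSq_eq_norm_sq, hwz₀]
  simp

end

theorem re_div_one_add_of_norm_eq_one {ζ : ℂ} (h1 : ‖ζ‖ = 1) (h2 : 1 + ζ ≠ 0) :
    (ζ / (1 + ζ)).re = 1 / 2 := by
  have hsq : ζ.re ^ 2 + ζ.im ^ 2 = 1 := by
    rw [sq, sq, ← normSq_apply, normSq_eq_norm_sq, h1, one_pow]
  have hns : normSq (1 + ζ) = 2 * (1 + ζ.re) := by
    rw [normSq_apply]; simp only [add_re, add_im, one_re, one_im]; nlinarith
  have hne : 1 + ζ.re ≠ 0 := by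
    have := normSq_eq_zero.not.2 h2
    rw [hns] at this
    exact right_ne_zero_of_mul this
  rw [div_re, hns]
  simp only [add_re, add_im, one_re, one_im]
  field_simp
  nlinarith

theorem norm_sub_one_lt_one_of_re_mul_logDeriv_lt_half {q : ℂ → ℂ}
    (hq : DifferentiableOn ℂ q (ball 0 1)) (hq0 : q 0 = 1) (hqne : ∀ z ∈ ball (0:ℂ) 1, q z ≠ 0)
    (hre : ∀ z ∈ ball (0:ℂ) 1, (z * logDeriv q z).re < 1 / 2) {z : ℂ} (hz : z ∈ ball (0:ℂ) 1) :
    ‖q z - 1‖ < 1 := by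
  by_contra! h
  obtain ⟨z₀, hz₀, hnorm, k, hk, hderiv⟩ :=
    exists_mul_deriv_eq_real_mul_of_one_le_norm (hq.sub_const 1) (by simp [hq0]) hz h
  have hlog : z₀ * logDeriv q z₀ = k * ((q z₀ - 1) / (1 + (q z₀ - 1))) := by
    rw [deriv_sub_const] at hderiv
    rw [logDeriv_apply, add_sub_cancel, ← mul_div_assoc, hderiv, mul_div_assoc]
  have := hre z₀ hz₀
  rw [hlog, re_ofReal_mul, re_div_one_add_of_norm_eq_one hnorm (by simpa using hqne z₀ hz₀)] at this
  linarith

theorem exists_eq_exp_of_ne_zero {c : ℂ} {r : ℝ} {p : ℂ → ℂ} (hp : DifferentiableOn ℂ p (ball c r))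
    (hpne : ∀ z ∈ ball c r, p z ≠ 0) :
    ∃ g : ℂ → ℂ, g c = log (p c) ∧ (∀ z ∈ ball c r, HasDerivAt g (logDeriv p z) z) ∧
      ∀ z ∈ ball c r, exp (g z) = p z := by
  have hdp : DifferentiableOn ℂ (logDeriv p) (ball c r) :=
    ((hp.analyticOnNhd isOpen_ball).deriv.differentiableOn).div hp hpne
  obtain ⟨g, hgc, hg⟩ := hdp.isExactOn_ball.with_val_at c (log (p c))
  refine ⟨g, hgc, hg, ?_⟩
  rcases (ball c r).eq_empty_or_nonempty with hempty | hne
  · simp [hempty]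
  have hc : c ∈ ball c r := mem_ball_self (nonempty_ball.1 hne)
  have hexp : DifferentiableOn ℂ (fun z => exp (g z)) (ball c r) :=
    fun z hz => (hg z hz).differentiableAt.cexp.differentiableWithinAt
  obtain ⟨a, -, ha⟩ := (logDeriv_eqOn_iff hexp hp isOpen_ball (convex_ball c r).isPreconnected
    hpne fun z _ => exp_ne_zero _).1 fun z hz => by
      rw [logDeriv_apply, (hg z hz).cexp.deriv]
      field_simp [exp_ne_zero]
  have ha1 : a = 1 := by
    have := ha hc
    simp only [Pi.smul_apply, smul_eq_mul, hgc, exp_log (hpne c hc)] at this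
    exact (mul_eq_right₀ (hpne c hc)).1 this.symm
  intro z hz
  simpa [ha1] using ha hz

theorem eqOn_log_exp {U : Set ℂ} {g : ℂ → ℂ} (hU : IsOpen U) (hU' : IsPreconnected U)
    (hg : DifferentiableOn ℂ g U) (hslit : ∀ z ∈ U, exp (g z) ∈ slitPlane) {z₀ : ℂ} (hz₀ : z₀ ∈ U)
    (hgz₀ : log (exp (g z₀)) = g z₀) : EqOn (fun z => log (exp (g z))) g U := by
  have hderiv : ∀ z ∈ U, HasDerivAt (fun z => log (exp (g z))) (deriv g z) z := fun z hz => by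
    have := ((hg.differentiableAt (hU.mem_nhds hz)).hasDerivAt.cexp).clog (hslit z hz)
    rwa [mul_div_cancel_left₀ _ (exp_ne_zero _)] at this
  exact hU.eqOn_of_deriv_eq hU' (fun z hz => (hderiv z hz).differentiableAt.differentiableWithinAt)
    hg (fun z hz => (hderiv z hz).deriv) hz₀ hgz₀

theorem mul_logDeriv_mul_deriv_div {𝕜 : Type*} [NontriviallyNormedField 𝕜] {f : 𝕜 → 𝕜} {z : 𝕜}
    (hz : z ≠ 0) (hfz : f z ≠ 0) (hf'z : deriv f z ≠ 0) (hf : DifferentiableAt 𝕜 f z)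
    (hf' : DifferentiableAt 𝕜 (deriv f) z) :
    z * logDeriv (fun w => w * deriv f w / f w) z
      = 1 + z * deriv (deriv f) z / deriv f z - z * deriv f z / f z := by
  rw [logDeriv_div (f := fun w => w * deriv f w) z (mul_ne_zero hz hf'z) hfz
      (differentiableAt_id.mul hf') hf,
    logDeriv_mul (f := fun w => w) z hz hf'z differentiableAt_id hf']
  simp only [logDeriv_apply, deriv_id'']
  field_simp

theorem stmt2_general (lam : ℝ) (hlam0 : 0 < lam)
    (f : ℂ → ℂ)
    (hf : DifferentiableOn ℂ f (ball 0 1))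
    (hfd : ∀ z ∈ ball (0:ℂ) 1, deriv f z ≠ 0)
    (hfne : ∀ z ∈ ball (0:ℂ) 1, z ≠ 0 → f z ≠ 0)
    (p : ℂ → ℂ)
    (hpdiff : DifferentiableOn ℂ p (ball 0 1))
    (hp0 : p 0 = 1)
    (hpval : ∀ z ∈ ball (0:ℂ) 1, z ≠ 0 → p z = z * deriv f z / f z)
    (hre : ∀ z ∈ ball (0:ℂ) 1,
      (1 + z * deriv (deriv f) z / deriv f z - p z).re < lam / 2) :
    ∃ n : ℕ, 1 ≤ n ∧
      Subord p (fun z => Complex.exp (((lam / n : ℝ) : ℂ) * Complex.log (1 + z ^ n))) := by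
  have hpne : ∀ z ∈ ball (0:ℂ) 1, p z ≠ 0 := by
    intro z hz
    rcases eq_or_ne z 0 with rfl | h
    · simp [hp0]
    · rw [hpval z hz h]
      exact div_ne_zero (mul_ne_zero h (hfd z hz)) (hfne z hz h)
  have hp_logDeriv : ∀ z ∈ ball (0:ℂ) 1, (z * logDeriv p z).re < lam / 2 := by
    intro z hz
    rcases eq_or_ne z 0 with rfl | h
    · simpa using hlam0
    have hpev : p =ᶠ[𝓝 z] fun w => w * deriv f w / f w :=
      Filter.mem_of_superset ((isOpen_ball.sdiff isClosed_singleton).mem_nhds ⟨hz, h⟩)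
        fun x hx => hpval x hx.1 hx.2
    have hdf := hf.analyticOnNhd isOpen_ball
    rw [(logDeriv_congr_nhds hpev).eq_of_nhds, mul_logDeriv_mul_deriv_div h (hfne z hz h)
      (hfd z hz) (hdf z hz).differentiableAt (hdf.deriv z hz).differentiableAt, ← hpval z hz h]
    exact hre z hz
  obtain ⟨g, hg0, hg', hexp⟩ := exists_eq_exp_of_ne_zero hpdiff hpne
  rw [hp0, log_one] at hg0
  set q : ℂ → ℂ := fun z => exp (g z / lam)
  have hq' : ∀ z ∈ ball (0:ℂ) 1, HasDerivAt q (q z * (logDeriv p z / lam)) z := fun z hz =>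
    ((hg' z hz).div_const (lam : ℂ)).cexp
  have hq : DifferentiableOn ℂ q (ball 0 1) := fun z hz =>
    (hq' z hz).differentiableAt.differentiableWithinAt
  have hq1 : ∀ z ∈ ball (0:ℂ) 1, ‖q z - 1‖ < 1 := by
    refine fun z hz => norm_sub_one_lt_one_of_re_mul_logDeriv_lt_half hq (by simp [q, hg0])
      (fun _ _ => exp_ne_zero _) (fun z hz => ?_) hz
    rw [logDeriv_apply, (hq' z hz).deriv, mul_div_cancel_left₀ _ (exp_ne_zero _),
      ← mul_div_assoc, div_ofReal_re, div_lt_iff₀ hlam0]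
    linarith [hp_logDeriv z hz]
  have hlog : EqOn (fun z => log (q z)) (fun z => g z / lam) (ball 0 1) :=
    eqOn_log_exp isOpen_ball (convex_ball 0 1).isPreconnected
      (fun z hz => ((hg' z hz).differentiableAt.div_const _).differentiableWithinAt)
      (fun z hz => by simpa using mem_slitPlane_of_norm_lt_one (hq1 z hz))
      (mem_ball_self one_pos) (by simp [hg0])
  refine ⟨1, le_rfl, fun z => q z - 1, hq.sub_const 1, fun z hz => mem_ball_zero_iff.2 (hq1 z hz),
    by simp [q, hg0], fun z hz => ?_⟩
  simp only [pow_one, Nat.cast_one, div_one, add_sub_cancel]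
  rw [show log (q z) = g z / lam from hlog hz, mul_div_cancel₀ _ (ofReal_ne_zero.2 hlam0.ne'),
    hexp z hz]

/-- Let `0 < λ ≤ 1`, `f ∈ 𝒜` with `f' ≠ 0` on `𝔻` and `f ≠ 0` on `𝔻 \ {0}`.
Let `p` be the analytic function on `𝔻` equal to `z f'(z)/f(z)` for `z ≠ 0` (and `p 0 = 1`),
and suppose `p` is not identically `1`. If `Re (1 + z f''(z)/f'(z) − z f'(z)/f(z)) < λ/2`
on `𝔻`, then there is an integer `n ≥ 1` with `z f'(z)/f(z) ≺ (1 + z^n)^{λ/n}` on `𝔻`. -/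
theorem stmt2 (lam : ℝ) (hlam0 : 0 < lam) (hlam1 : lam ≤ 1)
    (f : ℂ → ℂ)
    (hf : DifferentiableOn ℂ f (ball 0 1))
    (hf0 : f 0 = 0) (hfd0 : deriv f 0 = 1)
    (hfd : ∀ z ∈ ball (0:ℂ) 1, deriv f z ≠ 0)
    (hfne : ∀ z ∈ ball (0:ℂ) 1, z ≠ 0 → f z ≠ 0)
    (p : ℂ → ℂ)
    (hpdiff : DifferentiableOn ℂ p (ball 0 1))
    (hp0 : p 0 = 1)
    (hpval : ∀ z ∈ ball (0:ℂ) 1, z ≠ 0 → p z = z * deriv f z / f z)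
    (hpne1 : ¬ (∀ z ∈ ball (0:ℂ) 1, p z = 1))
    (hre : ∀ z ∈ ball (0:ℂ) 1,
      (1 + z * deriv (deriv f) z / deriv f z - p z).re < lam / 2) :
    ∃ n : ℕ, 1 ≤ n ∧
      Subord p (fun z => Complex.exp (((lam / n : ℝ) : ℂ) * Complex.log (1 + z ^ n))) :=
  stmt2_general lam hlam0 f hf hfd hfne p hpdiff hp0 hpval hre
end

section
/- Let 0 < λ ≤ 1 and let f ∈ 𝒩(λ). Then for every z ∈ 𝔻 with |z| = r, r(1 − r)^λ ≤ |f(z)| ≤ r(1 + r)^λ. -/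
/-!
Write `f z = z g z` with `g 0 = 1` and `g` zero-free on the disk. The hypothesis becomes
`Re q < λ/2` for `q w = w g' w / g w`, and `q 0 = 0`, so Schwarz's lemma applied to `q / (λ - q)`
gives `-λr/(1-r) ≤ Re q ≤ λr/(1+r)` on `|w| = r`. As `d/dt log |g (t z)| = Re q (t z) / t`,
integrating along the radius yields `(1-r)^λ ≤ |g z| ≤ (1+r)^λ`.
-/

open Complex ComplexConjugate Metric Set

lemma re_mem_Icc_of_norm_le_mul_norm_sub {a : ℂ} {c s : ℝ} (hc : 0 < c) (hs0 : 0 ≤ s)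
    (hs1 : s < 1) (ha : ‖a‖ ≤ s * ‖2 * c - a‖) :
    a.re ∈ Icc (-(2 * c * s / (1 - s))) (2 * c * s / (1 + s)) := by
  have hsq : a.re ^ 2 + a.im ^ 2 ≤ s ^ 2 * ((2 * c - a.re) ^ 2 + a.im ^ 2) := by
    have := pow_le_pow_left₀ (norm_nonneg a) ha 2
    rw [mul_pow, Complex.sq_norm, Complex.sq_norm, normSq_apply, normSq_apply] at this
    simpa [← sq] using this
  set x := a.re
  -- `hsq` factors as `((1 + s) x - 2cs) ((1 - s) x + 2cs) ≤ 0`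
  have hprod : ((1 + s) * x - 2 * c * s) * ((1 - s) * x + 2 * c * s) ≤ 0 := by
    nlinarith [mul_nonneg (sub_nonneg.2 (pow_le_one₀ (n := 2) hs0 hs1.le)) (sq_nonneg a.im)]
  have hlt : x < 2 * c := by
    by_contra! h
    nlinarith [mul_pos (by nlinarith : 0 < (1 + s) * x - 2 * c * s)
      (by nlinarith : 0 < (1 - s) * x + 2 * c * s)]
  have hle : (1 + s) * x - 2 * c * s ≤ (1 - s) * x + 2 * c * s := by
    nlinarith [mul_nonneg hs0 (sub_nonneg.2 hlt.le)]
  have hupper : (1 + s) * x - 2 * c * s ≤ 0 := by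
    by_contra! h
    nlinarith [mul_pos h (h.trans_le hle)]
  have hlower : 0 ≤ (1 - s) * x + 2 * c * s := by
    by_contra! h
    nlinarith [mul_pos (neg_pos.2 h) (neg_pos.2 (hle.trans_lt h))]
  constructor
  · rw [neg_le, le_div_iff₀ (by linarith)]
    linarith
  · rw [le_div_iff₀ (by linarith)]
    linarith

lemma norm_lt_norm_sub_of_re_lt {a : ℂ} {c : ℝ} (hc : 0 < c) (ha : a.re < c) :
    ‖a‖ < ‖2 * c - a‖ := by
  rw [← sq_lt_sq₀ (norm_nonneg _) (norm_nonneg _), Complex.sq_norm, Complex.sq_norm,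
    normSq_apply, normSq_apply]
  simp only [sub_re, sub_im, mul_re, mul_im, ofReal_re, ofReal_im]
  norm_num
  nlinarith

theorem re_mem_Icc_of_re_lt {q : ℂ → ℂ} {c : ℝ} (hq : DifferentiableOn ℂ q (ball 0 1))
    (hq0 : q 0 = 0) (hre : ∀ w ∈ ball (0 : ℂ) 1, (q w).re < c) {w : ℂ} (hw : w ∈ ball 0 1) :
    (q w).re ∈ Icc (-(2 * c * ‖w‖ / (1 - ‖w‖))) (2 * c * ‖w‖ / (1 + ‖w‖)) := by
  have hc : 0 < c := by simpa [hq0] using hre 0 (mem_ball_self one_pos)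
  have hne : ∀ v ∈ ball (0 : ℂ) 1, 2 * c - q v ≠ 0 := fun v hv h => by
    simpa [h] using (norm_nonneg _).trans_lt (norm_lt_norm_sub_of_re_lt hc (hre v hv))
  -- Schwarz's lemma applies to `q / (2c - q)`, which maps the disk into itself
  have hmaps : MapsTo (fun v => q v / (2 * c - q v)) (ball 0 1) (closedBall 0 1) := by
    intro v hv
    rw [mem_closedBall_zero_iff, norm_div, div_le_one (norm_pos_iff.2 (hne v hv))]
    exact (norm_lt_norm_sub_of_re_lt hc (hre v hv)).le
  have hschwarz : ‖q w / (2 * c - q w)‖ ≤ ‖w‖ :=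
    norm_le_norm_of_mapsTo_ball (hq.div ((differentiableOn_const _).sub hq) hne) hmaps
      (by simp [hq0]) (mem_ball_zero_iff.1 hw)
  rw [norm_div, div_le_iff₀ (norm_pos_iff.2 (hne w hw))] at hschwarz
  exact re_mem_Icc_of_norm_le_mul_norm_sub hc (norm_nonneg w) (mem_ball_zero_iff.1 hw) hschwarz

lemma hasDerivAt_log_norm_comp_ofReal_mul {g : ℂ → ℂ} {z : ℂ} {t : ℝ}
    (hg : DifferentiableAt ℂ g (t * z)) (hg0 : g (t * z) ≠ 0) :
    HasDerivAt (fun s : ℝ => Real.log ‖g (s * z)‖) (z * logDeriv g (t * z)).re t := by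
  have hG : HasDerivAt (fun u : ℂ => g (u * z)) (deriv g (t * z) * z) t := by
    have := hg.hasDerivAt.comp (t : ℂ) ((hasDerivAt_id _).mul_const z)
    rwa [one_mul] at this
  have hpos : 0 < ‖g (t * z)‖ ^ 2 := by positivity
  have hlog := (hG.comp_ofReal.norm_sq.log hpos.ne').div_const 2
  have hfun : (fun s : ℝ => Real.log ‖g (s * z)‖)
      = fun s : ℝ => Real.log (‖g (s * z)‖ ^ 2) / 2 := by
    funext s
    rw [Real.log_pow]
    push_cast
    ring
  rw [hfun]
  refine hlog.congr_deriv ?_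
  have hconj : z * logDeriv g (t * z)
      = deriv g (t * z) * z * conj (g (t * z)) / (normSq (g (t * z)) : ℂ) := by
    rw [logDeriv_apply, ← mul_conj, mul_div_mul_right _ _ ((map_ne_zero _).2 hg0)]
    ring
  rw [hconj, div_ofReal_re, Complex.inner, Complex.sq_norm]
  ring

lemma sub_le_sub_of_hasDerivAt_le {F G F' G' : ℝ → ℝ} {a b : ℝ} (hab : a ≤ b)
    (hF : ∀ t ∈ Icc a b, HasDerivAt F (F' t) t) (hG : ∀ t ∈ Icc a b, HasDerivAt G (G' t) t)
    (hle : ∀ t ∈ Ioo a b, F' t ≤ G' t) : F b - F a ≤ G b - G a := by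
  have hmono : MonotoneOn (fun t => G t - F t) (Icc a b) := by
    refine monotoneOn_of_hasDerivWithinAt_nonneg (f' := fun t => G' t - F' t)
      (convex_Icc a b) (fun t ht => ((hG t ht).sub (hF t ht)).continuousAt.continuousWithinAt)
      (fun t ht => ?_) (fun t ht => ?_) <;> rw [interior_Icc] at ht
    · exact ((hG t (Ioo_subset_Icc_self ht)).sub
        (hF t (Ioo_subset_Icc_self ht))).hasDerivWithinAt
    · exact sub_nonneg.2 (hle t ht)
  linarith [hmono (left_mem_Icc.2 hab) (right_mem_Icc.2 hab) hab]

theorem norm_mem_Icc_of_re_mul_logDeriv_mem_Icc {g : ℂ → ℂ} {a : ℝ}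
    (hg : DifferentiableOn ℂ g (ball 0 1)) (hg0 : g 0 = 1) (hne : ∀ w ∈ ball (0 : ℂ) 1, g w ≠ 0)
    (hbound : ∀ w ∈ ball (0 : ℂ) 1,
      (w * logDeriv g w).re ∈ Icc (-(a * ‖w‖ / (1 - ‖w‖))) (a * ‖w‖ / (1 + ‖w‖)))
    {z : ℂ} (hz : z ∈ ball 0 1) :
    ‖g z‖ ∈ Icc ((1 - ‖z‖) ^ a) ((1 + ‖z‖) ^ a) := by
  set r := ‖z‖
  have hr1 : r < 1 := mem_ball_zero_iff.1 hz
  have hnorm : ∀ t ∈ Icc (0 : ℝ) 1, ‖(t : ℂ) * z‖ = t * r := fun t ht => by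
    rw [norm_mul, norm_real, Real.norm_of_nonneg ht.1]
  have hmem : ∀ t ∈ Icc (0 : ℝ) 1, (t : ℂ) * z ∈ ball 0 1 := fun t ht => by
    rw [mem_ball_zero_iff, hnorm t ht]
    nlinarith [ht.2, norm_nonneg z]
  set φ : ℝ → ℝ := fun t => (z * logDeriv g (t * z)).re
  have hψ : ∀ t ∈ Icc (0 : ℝ) 1, HasDerivAt (fun s : ℝ => Real.log ‖g (s * z)‖) (φ t) t :=
    fun t ht => hasDerivAt_log_norm_comp_ofReal_mul
      (hg.differentiableAt (isOpen_ball.mem_nhds (hmem t ht))) (hne _ (hmem t ht))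
  have hφ : ∀ t ∈ Ioo (0 : ℝ) 1, φ t ∈ Icc (-(a * r / (1 - t * r))) (a * r / (1 + t * r)) := by
    intro t ht
    have h := hbound _ (hmem t (Ioo_subset_Icc_self ht))
    rw [hnorm t (Ioo_subset_Icc_self ht), mul_assoc, re_ofReal_mul] at h
    have h' : t * φ t ∈ Icc (t * -(a * r / (1 - t * r))) (t * (a * r / (1 + t * r))) := by
      convert h using 2 <;> ring
    exact ⟨le_of_mul_le_mul_left h'.1 ht.1, le_of_mul_le_mul_left h'.2 ht.1⟩
  have hlog : ∀ σ : ℝ, |σ| ≤ 1 → ∀ t ∈ Icc (0 : ℝ) 1, HasDerivAt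
      (fun s : ℝ => a * Real.log (1 + σ * s * r)) (σ * (a * r / (1 + σ * t * r))) t := by
    intro σ hσ t ht
    have hpos : 0 < 1 + σ * t * r := by
      nlinarith [neg_abs_le σ, ht.1, ht.2, norm_nonneg z, mul_nonneg ht.1 (norm_nonneg z)]
    have hlin : HasDerivAt (fun s : ℝ => 1 + σ * s * r) (σ * r) t := by
      simpa using (((hasDerivAt_id t).const_mul σ).mul_const r).const_add 1
    exact ((hlin.log hpos.ne').const_mul a).congr_deriv (by ring)
  have hupper := sub_le_sub_of_hasDerivAt_le zero_le_one hψ (hlog 1 (by simp)) fun t ht => by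
    simpa using (hφ t ht).2
  have hlower := sub_le_sub_of_hasDerivAt_le zero_le_one (hlog (-1) (by simp)) hψ fun t ht => by
    simpa [neg_div, ← sub_eq_add_neg] using (hφ t ht).1
  simp only [hg0, ofReal_zero, ofReal_one, zero_mul, one_mul, mul_zero, add_zero, norm_one,
    Real.log_one, sub_zero, neg_mul, ← sub_eq_add_neg] at hupper hlower
  have hgz : 0 < ‖g z‖ := norm_pos_iff.2 (hne z hz)
  exact ⟨(Real.rpow_le_iff_le_log (by linarith) hgz).2 hlower,
    (Real.le_rpow_iff_log_le hgz (by linarith [norm_nonneg z])).2 hupper⟩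

lemma eq_mul_dslope_zero {f : ℂ → ℂ} (hf0 : f 0 = 0) (z : ℂ) : f z = z * dslope f 0 z := by
  simpa [hf0] using (sub_smul_dslope f 0 z).symm

lemma mul_logDeriv_eq_one_add_of_eq_mul {f g : ℂ → ℂ} (hfg : ∀ w, f w = w * g w) {z : ℂ}
    (hz : z ≠ 0) (hg : g z ≠ 0) (hgd : DifferentiableAt ℂ g z) :
    z * logDeriv f z = 1 + z * logDeriv g z := by
  rw [funext hfg, logDeriv_mul (f := fun w => w) z hz hg differentiableAt_id hgd, logDeriv_id',
    mul_add, mul_one_div_cancel hz]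

lemma dslope_zero_ne_zero {f : ℂ → ℂ} (hf0 : f 0 = 0) (hfd0 : deriv f 0 ≠ 0)
    (hfne : ∀ z ∈ ball (0 : ℂ) 1, z ≠ 0 → f z ≠ 0) {w : ℂ} (hw : w ∈ ball 0 1) :
    dslope f 0 w ≠ 0 := by
  rcases eq_or_ne w 0 with rfl | hw0
  · rwa [dslope_same]
  · exact right_ne_zero_of_mul (eq_mul_dslope_zero hf0 w ▸ hfne w hw hw0)

lemma re_mul_logDeriv_dslope_zero_lt {f : ℂ → ℂ} {c : ℝ} (hc : 0 < c)
    (hf : DifferentiableOn ℂ f (ball 0 1)) (hf0 : f 0 = 0) (hfd0 : deriv f 0 ≠ 0)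
    (hfne : ∀ z ∈ ball (0 : ℂ) 1, z ≠ 0 → f z ≠ 0)
    (hN : ∀ z ∈ ball (0 : ℂ) 1, (z * deriv f z / f z).re < 1 + c) {w : ℂ} (hw : w ∈ ball 0 1) :
    (w * logDeriv (dslope f 0) w).re < c := by
  rcases eq_or_ne w 0 with rfl | hw0
  · simpa using hc
  have hgd : DifferentiableAt ℂ (dslope f 0) w :=
    ((differentiableOn_dslope (isOpen_ball.mem_nhds (mem_ball_self one_pos))).2 hf
      ).differentiableAt (isOpen_ball.mem_nhds hw)
  have h := hN w hw
  rw [mul_div_assoc, ← logDeriv_apply, mul_logDeriv_eq_one_add_of_eq_mul (eq_mul_dslope_zero hf0)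
    hw0 (dslope_zero_ne_zero hf0 hfd0 hfne hw) hgd, add_re, one_re] at h
  linarith

theorem stmt8_general (lam : ℝ) (hlam0 : 0 < lam)
    (f : ℂ → ℂ)
    (hf : DifferentiableOn ℂ f (ball 0 1))
    (hf0 : f 0 = 0) (hfd0 : deriv f 0 = 1)
    (hfne : ∀ z ∈ ball (0:ℂ) 1, z ≠ 0 → f z ≠ 0)
    (hN : ∀ z ∈ ball (0:ℂ) 1, (z * deriv f z / f z).re < 1 + lam / 2) :
    ∀ z ∈ ball (0:ℂ) 1, ∀ r : ℝ, ‖z‖ = r →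
      r * (1 - r) ^ lam ≤ ‖f z‖ ∧
      ‖f z‖ ≤ r * (1 + r) ^ lam := by
  rintro z hz r rfl
  set g := dslope f 0
  have hg : DifferentiableOn ℂ g (ball 0 1) :=
    (differentiableOn_dslope (isOpen_ball.mem_nhds (mem_ball_self one_pos))).2 hf
  have hg0 : g 0 = 1 := (dslope_same f 0).trans hfd0
  have hfd0' : deriv f 0 ≠ 0 := hfd0 ▸ one_ne_zero
  have hgne : ∀ w ∈ ball (0 : ℂ) 1, g w ≠ 0 := fun _ hw => dslope_zero_ne_zero hf0 hfd0' hfne hw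
  have hq : ∀ w ∈ ball (0 : ℂ) 1, (w * logDeriv g w).re < lam / 2 := fun w hw =>
    re_mul_logDeriv_dslope_zero_lt (half_pos hlam0) hf hf0 hfd0' hfne hN hw
  have hqd : DifferentiableOn ℂ (fun w => w * logDeriv g w) (ball 0 1) :=
    differentiableOn_id.mul ((hg.deriv isOpen_ball).div hg hgne)
  have hbound := fun w (hw : w ∈ ball (0 : ℂ) 1) => re_mem_Icc_of_re_lt hqd (by simp) hq hw
  rw [show 2 * (lam / 2) = lam by ring] at hbound
  obtain ⟨hlower, hupper⟩ := norm_mem_Icc_of_re_mul_logDeriv_mem_Icc hg hg0 hgne hbound hz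
  rw [eq_mul_dslope_zero hf0 z, norm_mul]
  exact ⟨mul_le_mul_of_nonneg_left hlower (norm_nonneg z),
    mul_le_mul_of_nonneg_left hupper (norm_nonneg z)⟩

/-- growth theorem in 𝒩(λ): if `0 < λ ≤ 1` and `f ∈ 𝒩(λ)`, then for every
`z ∈ 𝔻` with `|z| = r` one has `r (1−r)^λ ≤ |f z| ≤ r (1+r)^λ`. -/
theorem stmt8 (lam : ℝ) (hlam0 : 0 < lam) (hlam1 : lam ≤ 1)
    (f : ℂ → ℂ)
    (hf : DifferentiableOn ℂ f (ball 0 1))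
    (hf0 : f 0 = 0) (hfd0 : deriv f 0 = 1)
    (hfne : ∀ z ∈ ball (0:ℂ) 1, z ≠ 0 → f z ≠ 0)
    (hN : ∀ z ∈ ball (0:ℂ) 1, (z * deriv f z / f z).re < 1 + lam / 2) :
    ∀ z ∈ ball (0:ℂ) 1, ∀ r : ℝ, ‖z‖ = r →
      r * (1 - r) ^ lam ≤ ‖f z‖ ∧
      ‖f z‖ ≤ r * (1 + r) ^ lam :=
  stmt8_general lam hlam0 f hf hf0 hfd0 hfne hN
end

section
/- Let 0 < λ ≤ 1 and let f ∈ 𝒩(λ). Then for every z ∈ 𝔻 \ {0} with |z| = r, |arg(f(z)/z)| ≤ λ arcsin(r), where arg denotes the principal argument. -/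
/-!
Write `f z = z * g z` with `g 0 = 1` and `g ≠ 0` on the disk, and `q = g' / g`. Integrating along
the segment, `f z / z = exp L` with `L = ∫₀¹ z q(t z) dt`, and `p(ζ) = ζ q(ζ) = ζ f'(ζ) / f(ζ) - 1`
satisfies `p 0 = 0` and `Re p < λ / 2`. On the circle `|ζ| = R < 1` the Herglotz formula expresses
`p` through the nonnegative weight `v = λ / 2 - Re p`, whose mean is `λ / 2`; integrating its kernel
along the segment gives `L = 2 · avg_ζ (v(ζ) log (1 - z / ζ))`. As `|Im log (1 - w)| ≤ arcsin |w|`,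
this yields `|Im L| ≤ λ arcsin (|z| / R)`; let `R → 1` and use `|arg (exp L)| ≤ |Im L|`.
-/

open Complex Metric Set
open scoped Real ComplexConjugate

lemma abs_im_le_norm_mul_norm_one_sub (w : ℂ) : |w.im| ≤ ‖w‖ * ‖1 - w‖ := by
  refine abs_le_of_sq_le_sq ?_ (by positivity)
  rw [mul_pow, Complex.sq_norm, Complex.sq_norm, Complex.normSq_apply, Complex.normSq_apply]
  simp only [sub_re, one_re, sub_im, one_im]
  -- `‖w‖² ‖1 - w‖² - (Im w)² = (Re w - ‖w‖²)²`
  nlinarith [sq_nonneg (w.re - (w.re ^ 2 + w.im ^ 2))]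

lemma abs_im_log_one_sub_le_arcsin {w : ℂ} (hw : ‖w‖ < 1) :
    |(Complex.log (1 - w)).im| ≤ Real.arcsin ‖w‖ := by
  have hre : 0 < (1 - w).re := by
    rw [sub_re, one_re]; linarith [re_le_norm w]
  have hnorm : 0 < ‖1 - w‖ := norm_pos_iff.2 fun h => by simp [h] at hre
  have hsin : |(1 - w).im / ‖1 - w‖| ≤ ‖w‖ := by
    rw [abs_div, abs_norm, div_le_iff₀ hnorm, sub_im, one_im, zero_sub, abs_neg]
    exact abs_im_le_norm_mul_norm_one_sub w
  rw [log_im, arg_of_re_nonneg hre.le, abs_le, ← Real.arcsin_neg]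
  exact ⟨Real.arcsin_le_arcsin (neg_le_of_abs_le hsin), Real.arcsin_le_arcsin (le_of_abs_le hsin)⟩

lemma abs_arg_exp_le (z : ℂ) : |arg (exp z)| ≤ |z.im| := by
  rcases le_or_gt |z.im| π with h | h
  · rcases (abs_le.1 h).1.eq_or_lt with h' | h'
    · rw [← h', abs_neg, abs_of_pos Real.pi_pos]
      exact abs_arg_le_pi _
    · rw [arg_exp, (toIocMod_eq_self _).2 ⟨h', by linarith [(abs_le.1 h).2]⟩]
  · exact (abs_arg_le_pi _).trans h.le

section

variable {P : ℂ → ℂ} {R : ℝ} {w : ℂ}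

lemma sub_ne_zero_of_mem_sphere_of_mem_ball {ζ : ℂ} (hζ : ζ ∈ sphere (0 : ℂ) R)
    (hw : w ∈ ball 0 R) : ζ - w ≠ 0 :=
  sub_ne_zero.2 fun h => (h ▸ hw : ζ ∈ ball 0 R).ne (mem_sphere.1 hζ)

lemma continuousOn_div_sub_sphere (hw : w ∈ ball (0 : ℂ) R) :
    ContinuousOn (fun ζ : ℂ ↦ w / (ζ - w)) (sphere 0 R) :=
  continuousOn_const.div (continuousOn_id.sub continuousOn_const) fun _ hζ =>
    sub_ne_zero_of_mem_sphere_of_mem_ball hζ hw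

lemma DiffContOnCl.continuousOn_sphere (hP : DiffContOnCl ℂ P (ball 0 R)) (hR : 0 < R) :
    ContinuousOn P (sphere 0 R) :=
  hP.continuousOn.mono (by rw [closure_ball 0 hR.ne']; exact sphere_subset_closedBall)

lemma DiffContOnCl.circleAverage_mul_div_sub (hP : DiffContOnCl ℂ P (ball 0 R))
    (hw : w ∈ ball 0 R) :
    Real.circleAverage (fun ζ ↦ P ζ * (w / (ζ - w))) 0 R = P w - P 0 := by
  have hR : 0 < R := pos_of_mem_ball hw
  have hP' : DiffContOnCl ℂ P (ball 0 |R|) := by rwa [abs_of_pos hR]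
  have hw' : w ∈ ball 0 |R| := by rwa [abs_of_pos hR]
  have hsplit : EqOn (fun ζ ↦ P ζ * (w / (ζ - w)))
      (fun ζ ↦ ((ζ - 0) / (ζ - w)) • P ζ - P ζ) (sphere 0 |R|) := fun ζ hζ => by
    have := sub_ne_zero_of_mem_sphere_of_mem_ball hζ hw'
    simp only [smul_eq_mul]
    field_simp
    ring
  have hPc := hP.continuousOn_sphere hR
  rw [Real.circleAverage_congr_sphere hsplit, Real.circleAverage_fun_sub,
    hP'.circleAverage_smul_div hw', hP'.circleAverage]
  · refine ContinuousOn.circleIntegrable hR.le (ContinuousOn.fun_smul ?_ hPc)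
    exact (continuousOn_id.sub continuousOn_const).div (continuousOn_id.sub continuousOn_const)
      fun _ hζ => sub_ne_zero_of_mem_sphere_of_mem_ball hζ hw
  · exact hPc.circleIntegrable hR.le

lemma Real.circleAverage_conj {F : ℂ → ℂ} {c : ℂ} :
    Real.circleAverage (fun ζ ↦ conj (F ζ)) c R = conj (Real.circleAverage F c R) := by
  simp only [Real.circleAverage_def, intervalIntegral.intervalIntegral_conj, Complex.real_smul,
    map_mul, conj_ofReal]

lemma Real.circleAverage_re {f : ℂ → ℂ} {c : ℂ} (hf : CircleIntegrable f c R) :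
    Real.circleAverage (fun ζ ↦ (f ζ).re) c R = (Real.circleAverage f c R).re :=
  Complex.reCLM.circleAverage_comp_comm hf

lemma Real.circleAverage_im {f : ℂ → ℂ} {c : ℂ} (hf : CircleIntegrable f c R) :
    Real.circleAverage (fun ζ ↦ (f ζ).im) c R = (Real.circleAverage f c R).im :=
  Complex.imCLM.circleAverage_comp_comm hf

lemma DiffContOnCl.circleAverage_re (hP : DiffContOnCl ℂ P (ball 0 R)) (hR : 0 < R) :
    Real.circleAverage (fun ζ ↦ (P ζ).re) 0 R = (P 0).re := by
  have hP' : DiffContOnCl ℂ P (ball 0 |R|) := by rwa [abs_of_pos hR]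
  rw [Real.circleAverage_re ((hP.continuousOn_sphere hR).circleIntegrable hR.le), hP'.circleAverage]

/-- On the circle `conj ζ = R ^ 2 / ζ`, so the conjugate of the Cauchy kernel is holomorphic in `ζ`
and vanishes at the centre. -/
lemma DiffContOnCl.circleAverage_conj_mul_div_sub (hP : DiffContOnCl ℂ P (ball 0 R))
    (hw : w ∈ ball 0 R) :
    Real.circleAverage (fun ζ ↦ conj (P ζ) * (w / (ζ - w))) 0 R = 0 := by
  have hR : 0 < R := pos_of_mem_ball hw
  have hwR : ‖w‖ < R := mem_ball_zero_iff.1 hw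
  have hden : ∀ ζ ∈ closedBall (0 : ℂ) R, (R : ℂ) ^ 2 - conj w * ζ ≠ 0 := fun ζ hζ h => by
    have hζR : ‖ζ‖ ≤ R := mem_closedBall_zero_iff.1 hζ
    have := congrArg norm (sub_eq_zero.1 h)
    rw [norm_pow, norm_real, Real.norm_of_nonneg hR.le, norm_mul, norm_conj] at this
    nlinarith [mul_le_mul_of_nonneg_left hζR (norm_nonneg w)]
  have hreflect : EqOn (fun ζ ↦ conj (P ζ) * (w / (ζ - w)))
      (fun ζ ↦ conj (P ζ * (conj w * ζ / ((R : ℂ) ^ 2 - conj w * ζ)))) (sphere 0 |R|) := by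
    intro ζ hζ
    rw [abs_of_pos hR] at hζ
    have hζR : (R : ℂ) ^ 2 = ζ * conj ζ := by
      rw [mul_conj, normSq_eq_norm_sq, mem_sphere_zero_iff_norm.1 hζ]; push_cast; rfl
    have hζ0 : conj ζ ≠ 0 := by simpa using ne_zero_of_mem_sphere hR.ne' ⟨ζ, hζ⟩
    have hζw := sub_ne_zero_of_mem_sphere_of_mem_ball hζ hw
    simp only [map_mul, map_div₀, map_sub, conj_conj, hζR]
    rw [mul_comm (conj ζ) ζ, ← sub_mul, mul_div_mul_right _ _ hζ0]
  have hkernel : DiffContOnCl ℂ (fun ζ ↦ P ζ * (conj w * ζ / ((R : ℂ) ^ 2 - conj w * ζ)))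
      (ball 0 |R|) := by
    rw [abs_of_pos hR]
    refine hP.smul (DifferentiableOn.diffContOnCl ?_)
    rw [closure_ball 0 hR.ne']
    exact (differentiableOn_const _).mul differentiableOn_id |>.div
      ((differentiableOn_const _).sub ((differentiableOn_const _).mul differentiableOn_id)) hden
  rw [Real.circleAverage_congr_sphere hreflect, Real.circleAverage_conj, hkernel.circleAverage]
  simp

/-- Herglotz formula: `P` is recovered from its real part on the circle. -/
theorem DiffContOnCl.circleAverage_re_mul_div_sub (hP : DiffContOnCl ℂ P (ball 0 R))
    (hw : w ∈ ball 0 R) :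
    Real.circleAverage (fun ζ ↦ ((P ζ).re : ℂ) * (w / (ζ - w))) 0 R = (P w - P 0) / 2 := by
  have hR : 0 < R := pos_of_mem_ball hw
  have hPc := hP.continuousOn_sphere hR
  have hk := continuousOn_div_sub_sphere hw
  have hsplit : (fun ζ ↦ ((P ζ).re : ℂ) * (w / (ζ - w))) = fun ζ ↦
      (2 : ℂ)⁻¹ • (P ζ * (w / (ζ - w))) + (2 : ℂ)⁻¹ • (conj (P ζ) * (w / (ζ - w))) := by
    ext ζ
    rw [re_eq_add_conj, smul_eq_mul, smul_eq_mul]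
    ring
  rw [hsplit, Real.circleAverage_fun_add, Real.circleAverage_fun_smul,
    Real.circleAverage_fun_smul, hP.circleAverage_mul_div_sub hw,
    hP.circleAverage_conj_mul_div_sub hw]
  · ring
  all_goals exact ContinuousOn.circleIntegrable hR.le (by fun_prop)

lemma integral_div_sub_ofReal_mul {z ζ : ℂ} (h : ‖z‖ < ‖ζ‖) :
    ∫ t in (0 : ℝ)..1, z / (ζ - t * z) = -Complex.log (1 - z / ζ) := by
  have hζ : ζ ≠ 0 := norm_pos_iff.1 ((norm_nonneg z).trans_lt h)
  have hslit : ∀ t ∈ uIcc (0 : ℝ) 1, 1 - t * (z / ζ) ∈ slitPlane := fun t ht => by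
    rw [uIcc_of_le zero_le_one] at ht
    rw [sub_eq_add_neg]
    refine mem_slitPlane_of_norm_lt_one ?_
    rw [norm_neg, norm_mul, norm_real, Real.norm_of_nonneg ht.1, norm_div]
    exact (mul_le_of_le_one_left (by positivity) ht.2).trans_lt
      ((div_lt_one (norm_pos_iff.2 hζ)).2 h)
  have hfactor : ∀ t : ℝ, ζ - t * z = ζ * (1 - t * (z / ζ)) := fun t => by field_simp
  have hderiv : ∀ t ∈ uIcc (0 : ℝ) 1, HasDerivAt (fun t : ℝ ↦ -Complex.log (1 - t * (z / ζ)))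
      (z / (ζ - t * z)) t := fun t ht => by
    have := (((hasDerivAt_mul_const (z / ζ)).comp_ofReal (z := t)).const_sub 1).clog_real
      (hslit t ht) |>.neg
    refine this.congr_deriv ?_
    rw [hfactor]
    field_simp [slitPlane_ne_zero (hslit t ht)]
  have hcont : ContinuousOn (fun t : ℝ ↦ z / (ζ - t * z)) (uIcc 0 1) := by
    refine continuousOn_const.div (by fun_prop) fun t ht => ?_
    rw [hfactor]
    exact mul_ne_zero hζ (slitPlane_ne_zero (hslit t ht))
  rw [intervalIntegral.integral_eq_sub_of_hasDerivAt hderiv hcont.intervalIntegrable]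
  simp

variable {q : ℂ → ℂ} {z : ℂ}

lemma ofReal_mul_mem_ball {t : ℝ} (ht : t ∈ Icc (0 : ℝ) 1) (hz : ‖z‖ < R) :
    (t : ℂ) * z ∈ ball 0 R := by
  rw [mem_ball_zero_iff, norm_mul, norm_real, Real.norm_of_nonneg ht.1]
  exact (mul_le_of_le_one_left (norm_nonneg z) ht.2).trans_lt hz

lemma DiffContOnCl.mul_comp_ofReal_mul_eq_circleAverage (hq : DiffContOnCl ℂ q (ball 0 R))
    (hz : ‖z‖ < R) (c : ℝ) {t : ℝ} (ht : t ∈ Ioc (0 : ℝ) 1) :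
    z * q (t * z) =
      2 * Real.circleAverage (fun ζ ↦ (((ζ * q ζ).re - c : ℝ) : ℂ) * (z / (ζ - t * z))) 0 R := by
  have hP : DiffContOnCl ℂ (fun ζ ↦ ζ * q ζ - c) (ball 0 R) :=
    (differentiable_id.diffContOnCl.smul hq).sub_const _
  have htz := ofReal_mul_mem_ball (Ioc_subset_Icc_self ht) hz
  have hscale : (fun ζ ↦ (((ζ * q ζ - c).re : ℝ) : ℂ) * (t * z / (ζ - t * z))) =
      fun ζ ↦ (t : ℂ) • ((((ζ * q ζ).re - c : ℝ) : ℂ) * (z / (ζ - t * z))) := by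
    ext ζ
    simp only [sub_re, ofReal_re, smul_eq_mul]
    ring
  have := hP.circleAverage_re_mul_div_sub htz
  rw [hscale, Real.circleAverage_fun_smul, smul_eq_mul] at this
  apply mul_left_cancel₀ (ofReal_ne_zero.2 ht.1.ne')
  linear_combination (-2) * this

theorem DiffContOnCl.integral_mul_comp_ofReal_mul_eq_circleAverage
    (hq : DiffContOnCl ℂ q (ball 0 R)) (hz : ‖z‖ < R) (c : ℝ) :
    ∫ t in (0 : ℝ)..1, z * q (t * z) =
      2 * Real.circleAverage
        (fun ζ ↦ ((c - (ζ * q ζ).re : ℝ) : ℂ) * Complex.log (1 - z / ζ)) 0 R := by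
  have hR : 0 < R := (norm_nonneg z).trans_lt hz
  set C := circleMap 0 R
  set K : ℝ → ℝ → ℂ := fun t θ ↦ (((C θ * q (C θ)).re - c : ℝ) : ℂ) * (z / (C θ - t * z))
  have hqC : Continuous fun θ ↦ q (C θ) :=
    (hq.continuousOn_sphere hR).comp_continuous (continuous_circleMap 0 R)
      (circleMap_mem_sphere 0 hR.le)
  have hK : ContinuousOn (Function.uncurry K) (Icc 0 1 ×ˢ Icc 0 (2 * π)) := by
    have hv : Continuous fun θ ↦ (((C θ * q (C θ)).re - c : ℝ) : ℂ) :=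
      continuous_ofReal.comp ((continuous_re.comp ((continuous_circleMap 0 R).mul hqC)).sub
        continuous_const)
    refine ContinuousOn.mul (hv.comp continuous_snd).continuousOn
      (continuousOn_const.div (by fun_prop) fun p hp => ?_)
    exact sub_ne_zero_of_mem_sphere_of_mem_ball (circleMap_mem_sphere 0 hR.le p.2)
      (ofReal_mul_mem_ball hp.1 hz)
  have hswap : ∫ t in (0 : ℝ)..1, ∫ θ in (0 : ℝ)..2 * π, K t θ =
      ∫ θ in (0 : ℝ)..2 * π, ∫ t in (0 : ℝ)..1, K t θ := by
    refine MeasureTheory.intervalIntegral_intervalIntegral_swap ?_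
    rw [uIoc_of_le zero_le_one, uIoc_of_le Real.two_pi_pos.le]
    exact (hK.integrableOn_compact (isCompact_Icc.prod isCompact_Icc)).mono_set
      (prod_mono Ioc_subset_Icc_self Ioc_subset_Icc_self)
  have hinner : ∀ θ, ∫ t in (0 : ℝ)..1, K t θ =
      ((c - (C θ * q (C θ)).re : ℝ) : ℂ) * Complex.log (1 - z / C θ) := fun θ => by
    rw [intervalIntegral.integral_const_mul, integral_div_sub_ofReal_mul]
    · push_cast; ring
    · rwa [norm_circleMap_zero, abs_of_pos hR]
  calc ∫ t in (0 : ℝ)..1, z * q (t * z)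
      = ∫ t in (0 : ℝ)..1, 2 * ((2 * π)⁻¹ • ∫ θ in (0 : ℝ)..2 * π, K t θ) := by
        refine intervalIntegral.integral_congr_ae (MeasureTheory.ae_of_all _ fun t ht => ?_)
        rw [uIoc_of_le zero_le_one] at ht
        exact hq.mul_comp_ofReal_mul_eq_circleAverage hz c ht
    _ = 2 * Real.circleAverage
        (fun ζ ↦ ((c - (ζ * q ζ).re : ℝ) : ℂ) * Complex.log (1 - z / ζ)) 0 R := by
        rw [intervalIntegral.integral_const_mul, intervalIntegral.integral_smul, hswap,
          Real.circleAverage_def]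
        simp only [hinner]
        rfl

theorem DiffContOnCl.abs_im_integral_mul_comp_ofReal_mul_le {lam : ℝ}
    (hq : DiffContOnCl ℂ q (ball 0 R)) (hRe : ∀ ζ ∈ sphere (0 : ℂ) R, (ζ * q ζ).re ≤ lam / 2)
    (hz : ‖z‖ < R) :
    |(∫ t in (0 : ℝ)..1, z * q (t * z)).im| ≤ lam * Real.arcsin (‖z‖ / R) := by
  have hR : 0 < R := (norm_nonneg z).trans_lt hz
  have hP : DiffContOnCl ℂ (fun ζ ↦ ζ * q ζ) (ball 0 R) := differentiable_id.diffContOnCl.smul hq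
  have hPc := hP.continuousOn_sphere hR
  have hnorm : ∀ ζ ∈ sphere (0 : ℂ) R, ‖z / ζ‖ = ‖z‖ / R := fun ζ hζ => by
    rw [norm_div, mem_sphere_zero_iff_norm.1 hζ]
  have hρ : ‖z‖ / R < 1 := (div_lt_one hR).2 hz
  have hlog : ContinuousOn (fun ζ ↦ Complex.log (1 - z / ζ)) (sphere 0 R) := by
    refine ContinuousOn.clog (continuousOn_const.sub (continuousOn_const.div continuousOn_id
      fun ζ hζ => ne_zero_of_mem_sphere hR.ne' ⟨ζ, hζ⟩)) fun ζ hζ => ?_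
    rw [sub_eq_add_neg]
    exact mem_slitPlane_of_norm_lt_one (by rw [norm_neg, hnorm ζ hζ]; exact hρ)
  set v : ℂ → ℝ := fun ζ ↦ lam / 2 - (ζ * q ζ).re
  have hv : ContinuousOn v (sphere 0 R) :=
    continuousOn_const.sub (continuous_re.comp_continuousOn hPc)
  have hv0 : ∀ ζ ∈ sphere (0 : ℂ) R, 0 ≤ v ζ := fun ζ hζ => sub_nonneg.2 (hRe ζ hζ)
  have hF : ContinuousOn (fun ζ ↦ v ζ * (Complex.log (1 - z / ζ)).im) (sphere 0 R) :=
    hv.mul (continuous_im.comp_continuousOn hlog)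
  have hmass : Real.circleAverage v 0 R = lam / 2 := by
    rw [Real.circleAverage_fun_sub (f₂ := fun ζ ↦ (ζ * q ζ).re)
      (continuousOn_const.circleIntegrable hR.le)
      ((continuous_re.comp_continuousOn hPc).circleIntegrable hR.le), Real.circleAverage_const,
      hP.circleAverage_re hR, zero_mul, zero_re, sub_zero]
  rw [hq.integral_mul_comp_ofReal_mul_eq_circleAverage hz (lam / 2)]
  have him : (2 * Real.circleAverage
      (fun ζ ↦ ((lam / 2 - (ζ * q ζ).re : ℝ) : ℂ) * Complex.log (1 - z / ζ)) 0 R).im =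
      2 * Real.circleAverage (fun ζ ↦ v ζ * (Complex.log (1 - z / ζ)).im) 0 R := by
    rw [mul_im, ← Real.circleAverage_im (f := fun ζ ↦
      ((lam / 2 - (ζ * q ζ).re : ℝ) : ℂ) * Complex.log (1 - z / ζ))
      (((continuous_ofReal.comp_continuousOn hv).mul hlog).circleIntegrable hR.le)]
    simp [v]
  rw [him, abs_mul, abs_two]
  calc 2 * |Real.circleAverage (fun ζ ↦ v ζ * (Complex.log (1 - z / ζ)).im) 0 R|
      ≤ 2 * Real.circleAverage (fun ζ ↦ Real.arcsin (‖z‖ / R) • v ζ) 0 R := by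
        gcongr
        refine Real.abs_circleAverage_le_circleAverage_abs.trans
          (Real.circleAverage_mono ?_ ?_ fun ζ hζ => ?_)
        · exact hF.abs.circleIntegrable hR.le
        · exact (continuousOn_const.fun_smul hv).circleIntegrable hR.le
        rw [abs_of_pos hR] at hζ
        rw [Pi.abs_apply, abs_mul, abs_of_nonneg (hv0 ζ hζ), smul_eq_mul, mul_comm, ← hnorm ζ hζ]
        exact mul_le_mul_of_nonneg_right
          (abs_im_log_one_sub_le_arcsin (by rw [hnorm ζ hζ]; exact hρ)) (hv0 ζ hζ)
    _ = lam * Real.arcsin (‖z‖ / R) := by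
        rw [Real.circleAverage_fun_smul, hmass, smul_eq_mul]
        ring

open Filter Topology in
theorem abs_im_integral_mul_comp_ofReal_mul_le {lam : ℝ} (hq : DifferentiableOn ℂ q (ball 0 1))
    (hRe : ∀ ζ ∈ ball (0 : ℂ) 1, ζ ≠ 0 → (ζ * q ζ).re ≤ lam / 2) (hz : ‖z‖ < 1) :
    |(∫ t in (0 : ℝ)..1, z * q (t * z)).im| ≤ lam * Real.arcsin ‖z‖ := by
  have hlim : Tendsto (fun R ↦ lam * Real.arcsin (‖z‖ / R)) (𝓝[<] 1)
      (𝓝 (lam * Real.arcsin ‖z‖)) := by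
    have : ContinuousAt (fun R ↦ lam * Real.arcsin (‖z‖ / R)) 1 := by fun_prop (disch := norm_num)
    simpa using this.tendsto.mono_left nhdsWithin_le_nhds
  refine ge_of_tendsto hlim ?_
  filter_upwards [Ioo_mem_nhdsLT hz] with R hR
  have hR0 : 0 < R := (norm_nonneg z).trans_lt hR.1
  have hsub : closedBall (0 : ℂ) R ⊆ ball 0 1 := closedBall_subset_ball hR.2
  refine DiffContOnCl.abs_im_integral_mul_comp_ofReal_mul_le ?_ (fun ζ hζ => ?_) hR.1
  · exact (hq.mono (closure_ball (0 : ℂ) hR0.ne' ▸ hsub)).diffContOnCl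
  · exact hRe ζ (hsub (sphere_subset_closedBall hζ)) (ne_zero_of_mem_sphere hR0.ne' ⟨ζ, hζ⟩)

theorem eq_mul_exp_integral_logDeriv {g : ℂ → ℂ} {r : ℝ}
    (hg : DifferentiableOn ℂ g (ball 0 r)) (hg0 : ∀ w ∈ ball (0 : ℂ) r, g w ≠ 0)
    (hz : z ∈ ball (0 : ℂ) r) :
    g z = g 0 * Complex.exp (∫ t in (0 : ℝ)..1, z * logDeriv g (t * z)) := by
  have hseg : ∀ t ∈ Icc (0 : ℝ) 1, (t : ℂ) * z ∈ ball 0 r :=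
    fun t ht => ofReal_mul_mem_ball ht (mem_ball_zero_iff.1 hz)
  have hL : ContinuousOn (logDeriv g) (ball 0 r) :=
    (hg.analyticOnNhd isOpen_ball).deriv.continuousOn.div hg.continuousOn hg0
  -- `G` extends the integrand continuously to `ℝ`, so that its primitive `H` is differentiable.
  set G : ℝ → ℂ := fun t ↦ z * logDeriv g ((projIcc 0 1 zero_le_one t : ℝ) * z)
  have hG : Continuous G := continuous_const.mul
    (hL.comp_continuous (by fun_prop) fun t => hseg _ (projIcc 0 1 zero_le_one t).2)
  have hGeq : EqOn G (fun t ↦ z * logDeriv g (t * z)) (uIcc 0 1) := fun t ht => by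
    rw [uIcc_of_le zero_le_one] at ht
    simp [G, projIcc_of_mem _ ht]
  set H : ℝ → ℂ := fun u ↦ ∫ t in (0 : ℝ)..u, G t
  have hderiv : ∀ u ∈ uIcc (0 : ℝ) 1,
      HasDerivAt (fun u : ℝ ↦ g (u * z) * Complex.exp (-H u)) 0 u := by
    intro u hu
    have hu' : (u : ℂ) * z ∈ ball 0 r := hseg u (by rwa [uIcc_of_le zero_le_one] at hu)
    have hgu : HasDerivAt (fun v : ℝ ↦ g (v * z)) (deriv g (u * z) * z) u :=
      ((hg.differentiableAt (isOpen_ball.mem_nhds hu')).hasDerivAt.comp (u : ℂ)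
        (hasDerivAt_mul_const z)).comp_ofReal
    have hHu : HasDerivAt (fun v ↦ Complex.exp (-H v)) (Complex.exp (-H u) * -G u) u :=
      (hG.integral_hasStrictDerivAt 0 u).hasDerivAt.neg.cexp
    refine (hgu.mul hHu).congr_deriv ?_
    rw [hGeq hu]
    dsimp only
    rw [logDeriv_apply]
    field_simp [hg0 _ hu']
    ring
  have hFTC := intervalIntegral.integral_eq_sub_of_hasDerivAt hderiv intervalIntegrable_const
  simp only [intervalIntegral.integral_zero, ofReal_one, one_mul, ofReal_zero, zero_mul, H,
    intervalIntegral.integral_same, neg_zero, exp_zero, mul_one] at hFTC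
  rw [← intervalIntegral.integral_congr hGeq, ← eq_of_sub_eq_zero hFTC.symm, mul_assoc,
    ← Complex.exp_add, neg_add_cancel, Complex.exp_zero, mul_one]
end

lemma mul_logDeriv_mul_self {g : ℂ → ℂ} {w : ℂ} (hw : w ≠ 0) (hg : g w ≠ 0)
    (hgd : DifferentiableAt ℂ g w) :
    w * logDeriv (fun u ↦ u * g u) w = 1 + w * logDeriv g w := by
  rw [logDeriv_mul (f := fun u ↦ u) w hw hg differentiableAt_fun_id hgd, logDeriv_id']
  field_simp

theorem stmt9_general (lam : ℝ)
    (f : ℂ → ℂ)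
    (hf : DifferentiableOn ℂ f (ball 0 1))
    (hf0 : f 0 = 0) (hfd0 : deriv f 0 = 1)
    (hfne : ∀ z ∈ ball (0:ℂ) 1, z ≠ 0 → f z ≠ 0)
    (hN : ∀ z ∈ ball (0:ℂ) 1, (z * deriv f z / f z).re < 1 + lam / 2) :
    ∀ z ∈ ball (0:ℂ) 1, z ≠ 0 → ∀ r : ℝ, ‖z‖ = r →
      |Complex.arg (f z / z)| ≤ lam * Real.arcsin r := by
  rintro z hz hz0 r rfl
  set g := dslope f 0
  have hfg : f = fun w ↦ w * g w := funext fun w => by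
    simpa [hf0] using (sub_smul_dslope f 0 w).symm
  have hg : DifferentiableOn ℂ g (ball 0 1) :=
    (differentiableOn_dslope (ball_mem_nhds 0 one_pos)).2 hf
  have hg0 : g 0 = 1 := (dslope_same f 0).trans hfd0
  have hgne : ∀ w ∈ ball (0 : ℂ) 1, g w ≠ 0 := fun w hw => by
    rcases eq_or_ne w 0 with rfl | hw0
    · exact hg0 ▸ one_ne_zero
    · exact right_ne_zero_of_mul (hfg ▸ hfne w hw hw0)
  have hRe : ∀ w ∈ ball (0 : ℂ) 1, w ≠ 0 → (w * logDeriv g w).re ≤ lam / 2 := fun w hw hw0 => by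
    have := hN w hw
    rw [mul_div_assoc, ← logDeriv_apply, hfg, mul_logDeriv_mul_self hw0 (hgne w hw)
      (hg.differentiableAt (isOpen_ball.mem_nhds hw)), add_re, one_re] at this
    linarith
  have hq : DifferentiableOn ℂ (logDeriv g) (ball 0 1) :=
    (hg.analyticOnNhd isOpen_ball).deriv.differentiableOn.div hg hgne
  rw [show f z / z = g z by rw [hfg, mul_div_cancel_left₀ _ hz0],
    eq_mul_exp_integral_logDeriv hg hgne hz, hg0, one_mul]
  exact (abs_arg_exp_le _).trans
    (abs_im_integral_mul_comp_ofReal_mul_le hq hRe (mem_ball_zero_iff.1 hz))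

/-- rotation theorem in 𝒩(λ): if `0 < λ ≤ 1` and `f ∈ 𝒩(λ)`, then for every
`z ∈ 𝔻 \ {0}` with `|z| = r` one has `|arg (f z / z)| ≤ λ · arcsin r`. -/
theorem stmt9 (lam : ℝ) (hlam0 : 0 < lam) (hlam1 : lam ≤ 1)
    (f : ℂ → ℂ)
    (hf : DifferentiableOn ℂ f (ball 0 1))
    (hf0 : f 0 = 0) (hfd0 : deriv f 0 = 1)
    (hfne : ∀ z ∈ ball (0:ℂ) 1, z ≠ 0 → f z ≠ 0)
    (hN : ∀ z ∈ ball (0:ℂ) 1, (z * deriv f z / f z).re < 1 + lam / 2) :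
    ∀ z ∈ ball (0:ℂ) 1, z ≠ 0 → ∀ r : ℝ, ‖z‖ = r →
      |Complex.arg (f z / z)| ≤ lam * Real.arcsin r :=
  stmt9_general lam f hf hf0 hfd0 hfne hN
end

section
/- Let 0 < λ ≤ 1 and let f ∈ 𝒢(λ). Then for every z ∈ 𝔻 with |z| = r, (1 − r)^λ ≤ |f'(z)| ≤ (1 + r)^λ. -/
open Complex Metric

lemma mobius_re_bounds (w : ℂ) (ρ : ℝ) (hw : ‖w‖ ≤ ρ) (hρ : ρ < 1) :
    -ρ / (1 - ρ) ≤ (w / (1 + w)).re ∧ (w / (1 + w)).re ≤ ρ / (1 + ρ) := by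
  have hm0 : (0:ℝ) ≤ ‖w‖ := norm_nonneg w
  set m := ‖w‖ with hm
  have hsq : w.re ^ 2 + w.im ^ 2 = m ^ 2 := by
    rw [hm, Complex.sq_norm, Complex.normSq_apply]; ring
  have hx : w.re ≤ m := Complex.re_le_norm w
  have hx' : -m ≤ w.re := by
    have := Complex.abs_re_le_norm w
    rw [abs_le] at this; exact this.1
  have hρ0 : 0 ≤ ρ := le_trans hm0 hw
  have hre : (w / (1 + w)).re = (w.re + m ^ 2) / (1 + 2 * w.re + m ^ 2) := by
    rw [Complex.div_re]
    have h1 : (1 + w).re = 1 + w.re := by simp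
    have h2 : (1 + w).im = w.im := by simp
    rw [Complex.normSq_apply, h1, h2]
    rw [show (1 + w.re) * (1 + w.re) + w.im * w.im = 1 + 2*w.re + m^2 by nlinarith [hsq]]
    rw [← add_div]
    congr 1
    nlinarith [hsq]
  have hD : 0 < 1 + 2 * w.re + m ^ 2 := by nlinarith
  constructor
  · rw [hre, div_le_div_iff₀ (by linarith) hD] at *
    nlinarith
  · rw [hre, div_le_div_iff₀ hD (by linarith)]
    nlinarith

example (x : ℂ) (h : x.re ≠ 0) : x ≠ 0 := fun h0 => h (by simp [h0])
lemma path_hasDerivAt (g : ℂ → ℂ) (z : ℂ) (t : ℝ) (hg : DifferentiableAt ℂ g ((t:ℂ)*z)) :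
    HasDerivAt (fun s : ℝ => g ((s:ℂ)*z)) (z * deriv g ((t:ℂ)*z)) t := by
  have hc : HasDerivAt (fun s : ℝ => (s:ℂ)*z) z t := by
    simpa using (Complex.ofRealCLM.hasDerivAt (x := t)).mul_const z
  have hd := hg.hasDerivAt
  have h := (hd.hasFDerivAt.restrictScalars ℝ).comp_hasDerivAt t hc
  simpa [mul_comm, Function.comp_def] using h

lemma logabs_hasDerivAt (u : ℝ → ℂ) (u' : ℂ) (t : ℝ) (hu : HasDerivAt u u' t)
    (hne : u t ≠ 0) :
    HasDerivAt (fun s => Real.log ‖u s‖) ((u' / u t).re) t := by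
  have hRe : HasDerivAt (fun s => (u s).re) u'.re t :=
    (Complex.reCLM.hasFDerivAt.comp_hasDerivAt t hu)
  have hIm : HasDerivAt (fun s => (u s).im) u'.im t :=
    (Complex.imCLM.hasFDerivAt.comp_hasDerivAt t hu)
  have hN : HasDerivAt (fun s => (u s).re^2 + (u s).im^2)
      (2*(u t).re*u'.re + 2*(u t).im*u'.im) t := by
    have := ((hRe.pow 2).add (hIm.pow 2))
    simpa [mul_comm, mul_assoc, mul_left_comm, Pi.add_def, Pi.pow_def] using this
  have hN0 : (u t).re^2 + (u t).im^2 ≠ 0 := by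
    intro h
    apply hne
    have h1 : (u t).re = 0 := by nlinarith [sq_nonneg (u t).re, sq_nonneg (u t).im]
    have h2 : (u t).im = 0 := by nlinarith [sq_nonneg (u t).re, sq_nonneg (u t).im]
    exact Complex.ext h1 h2
  have hlog := (hN.log hN0).div_const 2
  have hEq : (fun s => Real.log ‖u s‖)
      = fun s => Real.log ((u s).re^2 + (u s).im^2) / 2 := by
    funext s
    rw [Complex.norm_def, Complex.normSq_apply, ← Real.log_sqrt (by positivity)]
    ring_nf
  have hN0' : ((u t).re^2 + (u t).im^2) * 2 ≠ 0 := by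
    intro h; exact hN0 (by linarith)
  have hval : (u' / u t).re
      = (2*(u t).re*u'.re + 2*(u t).im*u'.im) / ((u t).re^2 + (u t).im^2) / 2 := by
    rw [Complex.div_re, Complex.normSq_apply, ← add_div, div_div]
    rw [div_eq_div_iff (by simpa [pow_two] using hN0) (by simpa [pow_two] using hN0')]
    ring
  rw [hEq, hval]
  exact hlog

lemma key (lam : ℝ) (hlam0 : 0 < lam)
    (f : ℂ → ℂ) (hf : DifferentiableOn ℂ f (ball 0 1))
    (hfd : ∀ z ∈ ball (0:ℂ) 1, deriv f z ≠ 0)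
    (hG : ∀ z ∈ ball (0:ℂ) 1,
      (1 + z * deriv (deriv f) z / deriv f z).re < 1 + lam / 2) :
    ∀ w ∈ ball (0:ℂ) 1,
      lam * (-(‖w‖) / (1 - ‖w‖)) ≤ (w * deriv (deriv f) w / deriv f w).re ∧
      (w * deriv (deriv f) w / deriv f w).re ≤ lam * (‖w‖ / (1 + ‖w‖)) := by
  set q : ℂ → ℂ := fun w => w * deriv (deriv f) w / deriv f w with hqdef
  have hq : ∀ w ∈ ball (0:ℂ) 1, (q w).re < lam / 2 := by
    intro w hw
    have := hG w hw
    simp only [Complex.add_re, Complex.one_re] at this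
    simpa [hqdef] using by linarith
  have hden : ∀ w ∈ ball (0:ℂ) 1, (↑lam - q w) ≠ 0 := by
    intro w hw
    have h1 : (↑lam - q w).re = lam - (q w).re := by simp
    intro h0
    have := hq w hw
    rw [h0] at h1
    simp at h1
    linarith
  set ω : ℂ → ℂ := fun w => q w / (↑lam - q w) with hωdef
  have hωlt : ∀ w ∈ ball (0:ℂ) 1, ‖ω w‖ < 1 := by
    intro w hw
    have hd := hden w hw
    have hd' : 0 < ‖(↑lam - q w)‖ := norm_pos_iff.mpr hd
    rw [hωdef]
    simp only [norm_div]
    rw [div_lt_one hd']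
    have hsq : (‖q w‖)^2 < (‖(↑lam - q w)‖)^2 := by
      rw [Complex.sq_norm, Complex.sq_norm, Complex.normSq_apply, Complex.normSq_apply]
      have h1 : (↑lam - q w).re = lam - (q w).re := by simp
      have h2 : (↑lam - q w).im = -(q w).im := by simp
      rw [h1, h2]
      have := hq w hw
      nlinarith
    exact lt_of_pow_lt_pow_left₀ 2 (norm_nonneg _) hsq
  have hdω : DifferentiableOn ℂ ω (ball 0 1) := by
    have hfa : AnalyticOnNhd ℂ f (ball 0 1) := hf.analyticOnNhd isOpen_ball
    have h1 : AnalyticOnNhd ℂ (deriv f) (ball 0 1) := hfa.deriv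
    have h2 : AnalyticOnNhd ℂ (deriv (deriv f)) (ball 0 1) := h1.deriv
    have hq' : DifferentiableOn ℂ q (ball 0 1) := by
      apply DifferentiableOn.div
      · exact (differentiable_id.differentiableOn).mul h2.differentiableOn
      · exact h1.differentiableOn
      · exact hfd
    exact hq'.div ((differentiableOn_const _).sub hq') hden
  have hω0 : ω 0 = 0 := by simp [hωdef, hqdef]
  have hmaps : Set.MapsTo ω (ball 0 1) (ball 0 1) := by
    intro w hw
    simpa [mem_ball, Complex.dist_eq] using hωlt w hw
  have hschwarz : ∀ w ∈ ball (0:ℂ) 1, ‖ω w‖ ≤ ‖w‖ := by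
    intro w hw
    have := Complex.norm_le_norm_of_mapsTo_ball hdω (hmaps.mono_right ball_subset_closedBall) hω0 (by simpa [mem_ball, Complex.dist_eq] using hw)
    simpa using this
  intro w hw
  have habs : ‖w‖ < 1 := by simpa [mem_ball, Complex.dist_eq] using hw
  have h1ω : (1 : ℂ) + ω w ≠ 0 := by
    intro h0
    have heq : ω w = -1 := by linear_combination h0
    have hlt := hωlt w hw
    rw [heq] at hlt
    simp at hlt
  have hqeq : q w = ↑lam * (ω w / (1 + ω w)) := by
    have hQden := hden w hw
    have hlamne : (lam : ℂ) ≠ 0 := Complex.ofReal_ne_zero.2 hlam0.ne'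
    have hωw : ω w = q w / (↑lam - q w) := rfl
    rw [hωw]
    generalize hQw : q w = Q at hQden ⊢
    have hsum : 1 + Q / (↑lam - Q) = ↑lam / (↑lam - Q) := by
      field_simp
      ring
    rw [hsum, div_div_div_comm, div_self hQden, div_one, mul_div_cancel₀ _ hlamne]
  have hre : (q w).re = lam * (ω w / (1 + ω w)).re := by
    rw [hqeq]
    simp [Complex.mul_re]
  have hmob := mobius_re_bounds (ω w) (‖w‖) (hschwarz w hw) habs
  constructor
  · rw [show (w * deriv (deriv f) w / deriv f w) = q w from rfl, hre]
    have := hmob.1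
    nlinarith [this, hlam0.le]
  · rw [show (w * deriv (deriv f) w / deriv f w) = q w from rfl, hre]
    nlinarith [hmob.2, hlam0.le]

/-- distortion theorem in 𝒢(λ): if `0 < λ ≤ 1` and `f ∈ 𝒢(λ)`, then for
every `z ∈ 𝔻` with `|z| = r` one has `(1−r)^λ ≤ |f' z| ≤ (1+r)^λ`. -/
theorem stmt10 (lam : ℝ) (hlam0 : 0 < lam) (hlam1 : lam ≤ 1)
    (f : ℂ → ℂ)
    (hf : DifferentiableOn ℂ f (ball 0 1))
    (hf0 : f 0 = 0) (hfd0 : deriv f 0 = 1)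
    (hfd : ∀ z ∈ ball (0:ℂ) 1, deriv f z ≠ 0)
    (hG : ∀ z ∈ ball (0:ℂ) 1,
      (1 + z * deriv (deriv f) z / deriv f z).re < 1 + lam / 2) :
    ∀ z ∈ ball (0:ℂ) 1, ∀ r : ℝ, ‖z‖ = r →
      (1 - r) ^ lam ≤ ‖deriv f z‖ ∧
      ‖deriv f z‖ ≤ (1 + r) ^ lam := by
  intro z hz r hr
  subst hr
  set a := ‖z‖ with ha
  have ha1 : a < 1 := by simpa [mem_ball, Complex.dist_eq] using hz
  have ha0 : 0 ≤ a := norm_nonneg z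
  have hkey := key lam hlam0 f hf hfd hG
  have hfa : AnalyticOnNhd ℂ f (ball 0 1) := hf.analyticOnNhd isOpen_ball
  have h1 : AnalyticOnNhd ℂ (deriv f) (ball 0 1) := hfa.deriv
  -- membership of path points
  have hmem : ∀ t ∈ Set.Icc (0:ℝ) 1, ((t:ℂ) * z) ∈ ball (0:ℂ) 1 := by
    intro t ht
    simp only [mem_ball, Complex.dist_eq, sub_zero, norm_mul, Complex.norm_real, Real.norm_eq_abs]
    rw [_root_.abs_of_nonneg ht.1]
    nlinarith [ht.1, ht.2]
  have habst : ∀ t ∈ Set.Icc (0:ℝ) 1, ‖(t:ℂ) * z‖ = t * a := by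
    intro t ht
    rw [norm_mul, Complex.norm_real, Real.norm_eq_abs, _root_.abs_of_nonneg ht.1]
  set F : ℝ → ℝ := fun t => Real.log (‖deriv f ((t:ℂ) * z)‖) with hF
  set F' : ℝ → ℝ :=
    fun t => ((z * deriv (deriv f) ((t:ℂ)*z)) / deriv f ((t:ℂ)*z)).re with hF'
  have hFd : ∀ t ∈ Set.Icc (0:ℝ) 1, HasDerivAt F (F' t) t := by
    intro t ht
    have hu : HasDerivAt (fun s : ℝ => deriv f ((s:ℂ)*z))
        (z * deriv (deriv f) ((t:ℂ)*z)) t :=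
      path_hasDerivAt (deriv f) z t (h1 _ (hmem t ht)).differentiableAt
    exact logabs_hasDerivAt _ _ t hu (hfd _ (hmem t ht))
  -- bounds on F' in the open interval
  have hFb : ∀ t ∈ Set.Ioo (0:ℝ) 1,
      lam * (-a / (1 - t*a)) ≤ F' t ∧ F' t ≤ lam * (a / (1 + t*a)) := by
    intro t ht
    have htI : t ∈ Set.Icc (0:ℝ) 1 := ⟨ht.1.le, ht.2.le⟩
    have ht0 : 0 < t := ht.1
    have hk := hkey ((t:ℂ)*z) (hmem t htI)
    rw [habst t htI] at hk
    have hqF : ((t:ℂ)*z * deriv (deriv f) ((t:ℂ)*z) / deriv f ((t:ℂ)*z)).re = t * F' t := by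
      rw [hF']
      rw [show (t:ℂ)*z * deriv (deriv f) ((t:ℂ)*z) / deriv f ((t:ℂ)*z)
          = (t:ℂ) * (z * deriv (deriv f) ((t:ℂ)*z) / deriv f ((t:ℂ)*z)) by ring]
      simp [Complex.mul_re]
    rw [hqF] at hk
    have hup : lam * (t*a / (1 + t*a)) = t * (lam * (a / (1 + t*a))) := by ring
    have hlo : lam * (-(t*a) / (1 - t*a)) = t * (lam * (-a / (1 - t*a))) := by ring
    rw [hup, hlo] at hk
    constructor
    · exact (mul_le_mul_iff_right₀ ht0).mp hk.1
    · exact (mul_le_mul_iff_right₀ ht0).mp hk.2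
  have hFcont : ContinuousOn F (Set.Icc 0 1) :=
    fun t ht => ((hFd t ht).continuousAt).continuousWithinAt
  have hF0 : F 0 = 0 := by
    rw [hF]
    norm_num [hfd0]
  have hF1 : F 1 = Real.log (‖deriv f z‖) := by
    rw [hF]; norm_num
  have hd1pos : ∀ t ∈ Set.Icc (0:ℝ) 1, 0 < 1 + t*a := by
    intro t ht; nlinarith [ht.1, ht.2]
  have hd2pos : ∀ t ∈ Set.Icc (0:ℝ) 1, 0 < 1 - t*a := by
    intro t ht; nlinarith [ht.1, ht.2]
  have habsd : 0 < ‖deriv f z‖ := norm_pos_iff.mpr (hfd z hz)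
  -- upper bound
  have hup : Real.log (‖deriv f z‖) ≤ lam * Real.log (1 + a) := by
    set G : ℝ → ℝ := fun t => lam * Real.log (1 + t*a) - F t with hG'
    have hGd : ∀ t ∈ Set.Icc (0:ℝ) 1,
        HasDerivAt G (lam * (a / (1 + t*a)) - F' t) t := by
      intro t ht
      have hl1 : HasDerivAt (fun t : ℝ => 1 + t*a) a t := by
        simpa using ((hasDerivAt_id t).mul_const a).const_add 1
      exact ((hl1.log (hd1pos t ht).ne').const_mul lam).sub (hFd t ht)
    have hmono : MonotoneOn G (Set.Icc 0 1) := by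
      apply monotoneOn_of_deriv_nonneg (convex_Icc 0 1)
      · intro t ht
        exact ((hGd t ht).continuousAt).continuousWithinAt
      · intro t ht
        rw [interior_Icc] at ht
        exact ((hGd t ⟨ht.1.le, ht.2.le⟩).differentiableAt).differentiableWithinAt
      · intro t ht
        rw [interior_Icc] at ht
        rw [(hGd t ⟨ht.1.le, ht.2.le⟩).deriv]
        have := (hFb t ht).2
        linarith
    have h01 := hmono (Set.left_mem_Icc.2 zero_le_one) (Set.right_mem_Icc.2 zero_le_one) zero_le_one
    rw [hG'] at h01
    simp only [zero_mul, add_zero, Real.log_one, mul_zero, hF0, sub_zero, one_mul] at h01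
    rw [hF1] at h01
    linarith
  -- lower bound
  have hlo : lam * Real.log (1 - a) ≤ Real.log (‖deriv f z‖) := by
    set G : ℝ → ℝ := fun t => F t - lam * Real.log (1 - t*a) with hG'
    have hGd : ∀ t ∈ Set.Icc (0:ℝ) 1,
        HasDerivAt G (F' t - lam * (-a / (1 - t*a))) t := by
      intro t ht
      have hl1 : HasDerivAt (fun t : ℝ => 1 - t*a) (-a) t := by
        simpa using ((hasDerivAt_id t).mul_const a).const_sub 1
      exact (hFd t ht).sub ((hl1.log (hd2pos t ht).ne').const_mul lam)
    have hmono : MonotoneOn G (Set.Icc 0 1) := by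
      apply monotoneOn_of_deriv_nonneg (convex_Icc 0 1)
      · intro t ht
        exact ((hGd t ht).continuousAt).continuousWithinAt
      · intro t ht
        rw [interior_Icc] at ht
        exact ((hGd t ⟨ht.1.le, ht.2.le⟩).differentiableAt).differentiableWithinAt
      · intro t ht
        rw [interior_Icc] at ht
        rw [(hGd t ⟨ht.1.le, ht.2.le⟩).deriv]
        have := (hFb t ht).1
        linarith
    have h01 := hmono (Set.left_mem_Icc.2 zero_le_one) (Set.right_mem_Icc.2 zero_le_one) zero_le_one
    rw [hG'] at h01
    simp only [zero_mul, sub_zero, Real.log_one, mul_zero, hF0, one_mul] at h01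
    rw [hF1] at h01
    linarith
  constructor
  · rw [Real.rpow_def_of_pos (by linarith : (0:ℝ) < 1 - a)]
    calc Real.exp (Real.log (1-a) * lam) = Real.exp (lam * Real.log (1-a)) := by rw [mul_comm]
    _ ≤ Real.exp (Real.log (‖deriv f z‖)) := Real.exp_le_exp.2 hlo
    _ = ‖deriv f z‖ := Real.exp_log habsd
  · rw [Real.rpow_def_of_pos (by linarith : (0:ℝ) < 1 + a)]
    calc ‖deriv f z‖ = Real.exp (Real.log (‖deriv f z‖)) :=
          (Real.exp_log habsd).symm
    _ ≤ Real.exp (lam * Real.log (1 + a)) := Real.exp_le_exp.2 hup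
    _ = Real.exp (Real.log (1+a) * lam) := by rw [mul_comm]
end
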